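/- arXiv:math/9904170 — 10 statements merged into one kernel-verified Lean document; each statement's English description precedes it below -/
import Mathlib

section
/- Let g, h be smooth functions on Ω satisfying L_i g = λ^i L_i h for all i = 1,…,n. Then for all i ≠ j one has L_i L_j h = (L_j λ^i/(λ^j − λ^i)) L_i h + (L_i λ^j/(λ^i − λ^j)) L_j h + Σ_k c^k_{ij} ((λ^i − λ^k)/(λ^i − λ^j)) L_k h, where the sum is over all k = 1,…,n (the terms with k = i, j vanish or are interpreted via the stated fractions, which are well defined since λ^i ≠ λ^j pointwise). -/
/-!
Apply the commutator identity `L_i L_j - L_j L_i = ∑ k, c^k_{ij} L_k` to both `h` and `g`.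
For `g`, substitute `L_j g = λ^j L_j h` and expand by the Leibniz rule; eliminating
`L_j L_i h` with the identity for `h` leaves `(λ^i - λ^j) L_i L_j h` expressed through first
derivatives only, and `λ^i ≠ λ^j` allows dividing.
-/

/-- Directional derivative of `w` along the vector field `ξ i`. -/
noncomputable def Lder {n : ℕ} {F : Type*} [NormedAddCommGroup F] [NormedSpace ℝ F]
    (ξ : Fin n → (Fin n → ℝ) → (Fin n → ℝ)) (i : Fin n)
    (w : (Fin n → ℝ) → F) : (Fin n → ℝ) → F :=
  fun p => fderiv ℝ w p (ξ i p)

open VectorField Topology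

section Lder

variable {n : ℕ} {F : Type*} [NormedAddCommGroup F] [NormedSpace ℝ F]
  {ξ : Fin n → (Fin n → ℝ) → (Fin n → ℝ)} {p : Fin n → ℝ}

theorem Lder_congr_of_eventuallyEq {w w' : (Fin n → ℝ) → F} (hw : w =ᶠ[𝓝 p] w') (i : Fin n) :
    Lder ξ i w p = Lder ξ i w' p := by
  simp only [Lder, hw.fderiv_eq]

theorem Lder_mul {u v : (Fin n → ℝ) → ℝ} (hu : DifferentiableAt ℝ u p)
    (hv : DifferentiableAt ℝ v p) (i : Fin n) :
    Lder ξ i (fun q => u q * v q) p = u p * Lder ξ i v p + v p * Lder ξ i u p := by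
  simp [Lder, fderiv_fun_mul hu hv]

theorem differentiableAt_Lder {w : (Fin n → ℝ) → F} (hw : ContDiffAt ℝ 2 w p) {i : Fin n}
    (hξ : DifferentiableAt ℝ (ξ i) p) : DifferentiableAt ℝ (Lder ξ i w) p :=
  ((hw.fderiv_right (m := 1) le_rfl).differentiableAt one_ne_zero).clm_apply hξ

theorem Lder_Lder_apply {w : (Fin n → ℝ) → F} (hw : ContDiffAt ℝ 2 w p) {j : Fin n}
    (hξ : DifferentiableAt ℝ (ξ j) p) (i : Fin n) :
    Lder ξ i (Lder ξ j w) p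
      = fderiv ℝ (fderiv ℝ w) p (ξ i p) (ξ j p) + fderiv ℝ w p (fderiv ℝ (ξ j) p (ξ i p)) := by
  have hw' : DifferentiableAt ℝ (fderiv ℝ w) p :=
    (hw.fderiv_right (m := 1) le_rfl).differentiableAt one_ne_zero
  change fderiv ℝ (fun q => fderiv ℝ w q (ξ j q)) p (ξ i p) = _
  simp [fderiv_clm_apply hw' hξ, add_comm]

theorem Lder_Lder_sub_Lder_Lder {w : (Fin n → ℝ) → F} (hw : ContDiffAt ℝ 2 w p) {i j : Fin n}
    (hi : DifferentiableAt ℝ (ξ i) p) (hj : DifferentiableAt ℝ (ξ j) p) :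
    Lder ξ i (Lder ξ j w) p - Lder ξ j (Lder ξ i w) p
      = fderiv ℝ w p (lieBracket ℝ (ξ i) (ξ j) p) := by
  rw [Lder_Lder_apply hw hj, Lder_Lder_apply hw hi,
    hw.isSymmSndFDerivAt (by simp [minSmoothness_of_isRCLikeNormedField]) (ξ i p) (ξ j p),
    lieBracket, map_sub]
  abel

theorem Lder_Lder_sub_Lder_Lder_of_lieBracket_eq_sum {w : (Fin n → ℝ) → ℝ}
    (hw : ContDiffAt ℝ 2 w p) {i j : Fin n} (hi : DifferentiableAt ℝ (ξ i) p)
    (hj : DifferentiableAt ℝ (ξ j) p) {a : Fin n → ℝ}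
    (ha : lieBracket ℝ (ξ i) (ξ j) p = ∑ k, a k • ξ k p) :
    Lder ξ i (Lder ξ j w) p - Lder ξ j (Lder ξ i w) p = ∑ k, a k * Lder ξ k w p := by
  rw [Lder_Lder_sub_Lder_Lder hw hi hj, ha, map_sum]
  simp [Lder]

theorem Lder_Lder_of_Lder_eventuallyEq_mul {g h lam : (Fin n → ℝ) → ℝ} {a b : Fin n}
    (hgh : Lder ξ b g =ᶠ[𝓝 p] fun q => lam q * Lder ξ b h q)
    (hlam : DifferentiableAt ℝ lam p) (hh : ContDiffAt ℝ 2 h p)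
    (hξ : DifferentiableAt ℝ (ξ b) p) :
    Lder ξ a (Lder ξ b g) p = lam p * Lder ξ a (Lder ξ b h) p + Lder ξ b h p * Lder ξ a lam p := by
  rw [Lder_congr_of_eventuallyEq hgh, Lder_mul hlam (differentiableAt_Lder hh hξ)]

end Lder

theorem stmt0_general {n : ℕ} (Ω : Set (Fin n → ℝ)) (hΩ : IsOpen Ω)
    (ξ : Fin n → (Fin n → ℝ) → (Fin n → ℝ))
    (hξ : ∀ i, ContDiffOn ℝ (⊤ : ℕ∞) (ξ i) Ω)
    (c : Fin n → Fin n → Fin n → (Fin n → ℝ) → ℝ)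
    (hc : ∀ i j, ∀ p ∈ Ω,
      fderiv ℝ (ξ j) p (ξ i p) - fderiv ℝ (ξ i) p (ξ j p) = ∑ k, c i j k p • ξ k p)
    (lam : Fin n → (Fin n → ℝ) → ℝ)
    (hlam : ∀ i, ContDiffOn ℝ (⊤ : ℕ∞) (lam i) Ω)
    (hdist : ∀ i j, i ≠ j → ∀ p ∈ Ω, lam i p ≠ lam j p)
    (g h : (Fin n → ℝ) → ℝ)
    (hg : ContDiffOn ℝ (⊤ : ℕ∞) g Ω) (hh : ContDiffOn ℝ (⊤ : ℕ∞) h Ω)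
    (hcl : ∀ i, ∀ p ∈ Ω, Lder ξ i g p = lam i p * Lder ξ i h p) :
    ∀ i j, i ≠ j → ∀ p ∈ Ω,
      Lder ξ i (Lder ξ j h) p
        = (Lder ξ j (lam i) p / (lam j p - lam i p)) * Lder ξ i h p
          + (Lder ξ i (lam j) p / (lam i p - lam j p)) * Lder ξ j h p
          + ∑ k, c i j k p * ((lam i p - lam k p) / (lam i p - lam j p)) * Lder ξ k h p := by
  intro i j hij p hp
  have hΩp := hΩ.mem_nhds hp
  have hC2 {w : (Fin n → ℝ) → ℝ} (hw : ContDiffOn ℝ (⊤ : ℕ∞) w Ω) : ContDiffAt ℝ 2 w p :=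
    (hw.contDiffAt hΩp).of_le (WithTop.coe_le_coe.mpr le_top)
  have hξp (k : Fin n) : DifferentiableAt ℝ (ξ k) p :=
    ((hξ k).contDiffAt hΩp).differentiableAt (by simp)
  have comm {w : (Fin n → ℝ) → ℝ} (hw : ContDiffOn ℝ (⊤ : ℕ∞) w Ω) :=
    Lder_Lder_sub_Lder_Lder_of_lieBracket_eq_sum (hC2 hw) (hξp i) (hξp j) (hc i j p hp)
  have hLg (a b : Fin n) :=
    Lder_Lder_of_Lder_eventuallyEq_mul (a := a) (Filter.eventually_of_mem hΩp (hcl b))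
      (((hlam b).contDiffAt hΩp).differentiableAt (by simp)) (hC2 hh) (hξp b)
  have commg := comm hg
  rw [hLg, hLg, Finset.sum_congr rfl fun k _ => by rw [hcl k p hp]] at commg
  have hsum : ∑ k, c i j k p * ((lam i p - lam k p) / (lam i p - lam j p)) * Lder ξ k h p
      = (lam i p * ∑ k, c i j k p * Lder ξ k h p - ∑ k, c i j k p * (lam k p * Lder ξ k h p))
        / (lam i p - lam j p) := by
    rw [Finset.mul_sum, ← Finset.sum_sub_distrib, Finset.sum_div]
    exact Finset.sum_congr rfl fun k _ => by ring
  have hne : lam i p - lam j p ≠ 0 := sub_ne_zero.mpr (hdist i j hij p hp)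
  rw [← neg_sub (lam i p), div_neg, hsum, ← comm hh]
  -- keeps `field_simp` from rewriting inside the sum shared with `commg`
  generalize ∑ k, c i j k p * (lam k p * Lder ξ k h p) = S at commg ⊢
  field_simp
  linear_combination -commg

/-- if `L_i g = λ^i L_i h` for all `i`, then `h` satisfies the
second-order system (3) for conserved densities. -/
theorem stmt0 {n : ℕ} (Ω : Set (Fin n → ℝ)) (hΩ : IsOpen Ω)
    (ξ : Fin n → (Fin n → ℝ) → (Fin n → ℝ))
    (hξ : ∀ i, ContDiffOn ℝ (⊤ : ℕ∞) (ξ i) Ω)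
    (hind : ∀ p ∈ Ω, LinearIndependent ℝ (fun i => ξ i p))
    (c : Fin n → Fin n → Fin n → (Fin n → ℝ) → ℝ)
    (hc : ∀ i j, ∀ p ∈ Ω,
      fderiv ℝ (ξ j) p (ξ i p) - fderiv ℝ (ξ i) p (ξ j p) = ∑ k, c i j k p • ξ k p)
    (lam : Fin n → (Fin n → ℝ) → ℝ)
    (hlam : ∀ i, ContDiffOn ℝ (⊤ : ℕ∞) (lam i) Ω)
    (hdist : ∀ i j, i ≠ j → ∀ p ∈ Ω, lam i p ≠ lam j p)
    (g h : (Fin n → ℝ) → ℝ)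
    (hg : ContDiffOn ℝ (⊤ : ℕ∞) g Ω) (hh : ContDiffOn ℝ (⊤ : ℕ∞) h Ω)
    (hcl : ∀ i, ∀ p ∈ Ω, Lder ξ i g p = lam i p * Lder ξ i h p) :
    ∀ i j, i ≠ j → ∀ p ∈ Ω,
      Lder ξ i (Lder ξ j h) p
        = (Lder ξ j (lam i) p / (lam j p - lam i p)) * Lder ξ i h p
          + (Lder ξ i (lam j) p / (lam i p - lam j p)) * Lder ξ j h p
          + ∑ k, c i j k p * ((lam i p - lam k p) / (lam i p - lam j p)) * Lder ξ k h p :=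
  stmt0_general Ω hΩ ξ hξ c hc lam hlam hdist g h hg hh hcl
end

section
/- Let h be a nonvanishing smooth function on Ω, φ a smooth function with φ(p) ≠ λ^i(p) for all i and all p, and set g = φ·h. If L_i g = λ^i L_i h for all i, then φ satisfies, for all i ≠ j: L_i L_j φ = (1/(φ − λ^i) + 1/(φ − λ^j)) L_i φ · L_j φ + (L_j λ^i/(λ^j − λ^i))·((φ − λ^j)/(φ − λ^i))·L_i φ + (L_i λ^j/(λ^i − λ^j))·((φ − λ^i)/(φ − λ^j))·L_j φ + Σ_k c^k_{ij}·((λ^i − λ^k)/(λ^i − λ^j))·((φ − λ^j)/(φ − λ^k))·L_k φ. -/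
/-!
The hypothesis says `L_k h = h a_k` with `a_k = L_k φ / (λ^k - φ)`, so the `a_k` are the
components of `d log h` in the frame `ξ`. The compatibility condition
`[L_i, L_j] h = ∑ c^k_{ij} L_k h` then turns into `L_i a_j - L_j a_i = ∑ c^k_{ij} a_k`.
Expanding `L_i a_j`, `L_j a_i` by the quotient rule and eliminating `L_j L_i φ` through the
commutator gives a linear equation for `L_i L_j φ`, whose solution is the stated formula.
-/

open Filter Topology

section Lder

variable {n : ℕ} {ξ : Fin n → (Fin n → ℝ) → (Fin n → ℝ)} {p : Fin n → ℝ}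
  {f g w : (Fin n → ℝ) → ℝ}

theorem lder_congr (i : Fin n) (hfg : f =ᶠ[𝓝 p] g) : Lder ξ i f p = Lder ξ i g p := by
  simp only [Lder, hfg.fderiv_eq]

theorem lder_mul (i : Fin n) (hf : DifferentiableAt ℝ f p) (hg : DifferentiableAt ℝ g p) :
    Lder ξ i (fun q => f q * g q) p = f p * Lder ξ i g p + g p * Lder ξ i f p := by
  simp [Lder, fderiv_fun_mul hf hg]

theorem lder_sub (i : Fin n) (hf : DifferentiableAt ℝ f p) (hg : DifferentiableAt ℝ g p) :
    Lder ξ i (fun q => f q - g q) p = Lder ξ i f p - Lder ξ i g p := by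
  simp [Lder, fderiv_fun_sub hf hg]

theorem lder_div (i : Fin n) (hf : DifferentiableAt ℝ f p) (hg : DifferentiableAt ℝ g p)
    (hg0 : g p ≠ 0) :
    Lder ξ i (fun q => f q / g q) p = (g p * Lder ξ i f p - f p * Lder ξ i g p) / g p ^ 2 := by
  have hinv : HasFDerivAt (fun q => (g q)⁻¹) ((-(g p ^ 2)⁻¹) • fderiv ℝ g p) p :=
    (hasDerivAt_inv hg0).comp_hasFDerivAt p hg.hasFDerivAt
  unfold Lder
  simp only [div_eq_mul_inv]
  rw [(hf.hasFDerivAt.fun_mul hinv).fderiv]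
  simp only [add_apply, smul_apply, smul_eq_mul]
  field_simp
  ring

theorem differentiableAt_lder (i : Fin n) (hw : ContDiffAt ℝ 2 w p)
    (hξ : DifferentiableAt ℝ (ξ i) p) : DifferentiableAt ℝ (Lder ξ i w) p :=
  ((hw.fderiv_right (m := 1) le_rfl).differentiableAt one_ne_zero).clm_apply hξ

theorem lder_lder_sub_lder_lder {c : Fin n → ℝ} {i j : Fin n} (hw : ContDiffAt ℝ 2 w p)
    (hξi : DifferentiableAt ℝ (ξ i) p) (hξj : DifferentiableAt ℝ (ξ j) p)
    (hc : fderiv ℝ (ξ j) p (ξ i p) - fderiv ℝ (ξ i) p (ξ j p) = ∑ k, c k • ξ k p) :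
    Lder ξ i (Lder ξ j w) p - Lder ξ j (Lder ξ i w) p = ∑ k, c k * Lder ξ k w p := by
  have hw' : DifferentiableAt ℝ (fderiv ℝ w) p :=
    (hw.fderiv_right (m := 1) le_rfl).differentiableAt one_ne_zero
  have hsymm := hw.isSymmSndFDerivAt (by simp)
  unfold Lder
  rw [fderiv_clm_apply hw' hξi, fderiv_clm_apply hw' hξj]
  simp [hsymm.eq (ξ i p) (ξ j p), ← map_sub, hc]

theorem lder_sub_lder_eq_sum_of_lder_eq_mul {a : Fin n → (Fin n → ℝ) → ℝ}
    {c : Fin n → ℝ} {i j : Fin n} (hw : ContDiffAt ℝ 2 w p) (hξi : DifferentiableAt ℝ (ξ i) p)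
    (hξj : DifferentiableAt ℝ (ξ j) p)
    (hc : fderiv ℝ (ξ j) p (ξ i p) - fderiv ℝ (ξ i) p (ξ j p) = ∑ k, c k • ξ k p)
    (hai : DifferentiableAt ℝ (a i) p) (haj : DifferentiableAt ℝ (a j) p)
    (hwa : ∀ᶠ q in 𝓝 p, ∀ k, Lder ξ k w q = w q * a k q) (hw0 : w p ≠ 0) :
    Lder ξ i (a j) p - Lder ξ j (a i) p = ∑ k, c k * a k p := by
  have hw1 : DifferentiableAt ℝ w p := hw.differentiableAt two_ne_zero
  have hwa_p := hwa.self_of_nhds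
  have hij : Lder ξ i (Lder ξ j w) p = w p * Lder ξ i (a j) p + a j p * Lder ξ i w p := by
    rw [lder_congr i (hwa.mono fun q hq => hq j), lder_mul i hw1 haj]
  have hji : Lder ξ j (Lder ξ i w) p = w p * Lder ξ j (a i) p + a i p * Lder ξ j w p := by
    rw [lder_congr j (hwa.mono fun q hq => hq i), lder_mul j hw1 hai]
  have hsum : ∑ k, c k * Lder ξ k w p = w p * ∑ k, c k * a k p := by
    rw [Finset.mul_sum]
    exact Finset.sum_congr rfl fun k _ => by rw [hwa_p k]; ring
  have hcomm := lder_lder_sub_lder_lder hw hξi hξj hc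
  rw [hij, hji, hsum, hwa_p i, hwa_p j] at hcomm
  apply mul_left_cancel₀ hw0
  linear_combination hcomm

theorem lder_eq_mul_div_of_lder_mul_eq (i : Fin n) {l : ℝ} (hf : DifferentiableAt ℝ f p)
    (hg : DifferentiableAt ℝ g p) (hfl : f p ≠ l)
    (hfg : Lder ξ i (fun q => f q * g q) p = l * Lder ξ i g p) :
    Lder ξ i g p = g p * (Lder ξ i f p / (l - f p)) := by
  rw [lder_mul i hf hg] at hfg
  have : l - f p ≠ 0 := sub_ne_zero.2 hfl.symm
  field_simp
  linear_combination -hfg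

end Lder

theorem sum_mul_div_mul_div_eq {ι : Type*} [Fintype ι] (c d l : ι → ℝ) (x li lj : ℝ)
    (hx : ∀ k, x ≠ l k) :
    ∑ k, c k * ((li - l k) / (li - lj)) * ((x - lj) / (x - l k)) * d k
      = (x - lj) / (li - lj) * (∑ k, c k * d k + (x - li) * ∑ k, c k * (d k / (l k - x))) := by
  rw [Finset.mul_sum, ← Finset.sum_add_distrib, Finset.mul_sum]
  refine Finset.sum_congr rfl fun k _ => ?_
  have h₁ : x - l k ≠ 0 := sub_ne_zero.2 (hx k)
  have h₂ : l k - x ≠ 0 := sub_ne_zero.2 (hx k).symm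
  field_simp
  ring

theorem eq_of_sub_eq_of_div_sub_div_eq {x li lj ui uj mi mj X Y S T : ℝ} (hi : x ≠ li)
    (hj : x ≠ lj) (hij : li ≠ lj) (hcomm : X - Y = S)
    (hclosed : ((lj - x) * X - uj * (mj - ui)) / (lj - x) ^ 2
      - ((li - x) * Y - ui * (mi - uj)) / (li - x) ^ 2 = T) :
    X = (1 / (x - li) + 1 / (x - lj)) * (ui * uj) + mi / (lj - li) * ((x - lj) / (x - li)) * ui
      + mj / (li - lj) * ((x - li) / (x - lj)) * uj
      + (x - lj) / (li - lj) * (S + (x - li) * T) := by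
  rw [← hcomm, ← hclosed]
  have := sub_ne_zero.2 hi
  have := sub_ne_zero.2 hj
  have := sub_ne_zero.2 hi.symm
  have := sub_ne_zero.2 hj.symm
  have := sub_ne_zero.2 hij
  have := sub_ne_zero.2 hij.symm
  field_simp
  ring

theorem stmt1_general {n : ℕ} (Ω : Set (Fin n → ℝ)) (hΩ : IsOpen Ω)
    (ξ : Fin n → (Fin n → ℝ) → (Fin n → ℝ))
    (hξ : ∀ i, ContDiffOn ℝ (⊤ : ℕ∞) (ξ i) Ω)
    (c : Fin n → Fin n → Fin n → (Fin n → ℝ) → ℝ)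
    (hc : ∀ i j, ∀ p ∈ Ω,
      fderiv ℝ (ξ j) p (ξ i p) - fderiv ℝ (ξ i) p (ξ j p) = ∑ k, c i j k p • ξ k p)
    (lam : Fin n → (Fin n → ℝ) → ℝ)
    (hlam : ∀ i, ContDiffOn ℝ (⊤ : ℕ∞) (lam i) Ω)
    (hdist : ∀ i j, i ≠ j → ∀ p ∈ Ω, lam i p ≠ lam j p)
    (h φ : (Fin n → ℝ) → ℝ)
    (hh : ContDiffOn ℝ (⊤ : ℕ∞) h Ω) (hφ : ContDiffOn ℝ (⊤ : ℕ∞) φ Ω)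
    (hh0 : ∀ p ∈ Ω, h p ≠ 0)
    (hφlam : ∀ i, ∀ p ∈ Ω, φ p ≠ lam i p)
    (hcl : ∀ i, ∀ p ∈ Ω,
      Lder ξ i (fun q => φ q * h q) p = lam i p * Lder ξ i h p) :
    ∀ i j, i ≠ j → ∀ p ∈ Ω,
      Lder ξ i (Lder ξ j φ) p
        = (1 / (φ p - lam i p) + 1 / (φ p - lam j p)) * (Lder ξ i φ p * Lder ξ j φ p)
          + (Lder ξ j (lam i) p / (lam j p - lam i p))
            * ((φ p - lam j p) / (φ p - lam i p)) * Lder ξ i φ p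
          + (Lder ξ i (lam j) p / (lam i p - lam j p))
            * ((φ p - lam i p) / (φ p - lam j p)) * Lder ξ j φ p
          + ∑ k, c i j k p * ((lam i p - lam k p) / (lam i p - lam j p))
            * ((φ p - lam j p) / (φ p - lam k p)) * Lder ξ k φ p := by
  intro i j hij p hp
  have smooth {F : Type} [NormedAddCommGroup F] [NormedSpace ℝ F] {w : (Fin n → ℝ) → F}
      (hw : ContDiffOn ℝ (⊤ : ℕ∞) w Ω) {q} (hq : q ∈ Ω) : ContDiffAt ℝ 2 w q :=
    (hw.contDiffAt (hΩ.mem_nhds hq)).of_le (WithTop.coe_le_coe.2 le_top)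
  have diff {F : Type} [NormedAddCommGroup F] [NormedSpace ℝ F] {w : (Fin n → ℝ) → F}
      (hw : ContDiffOn ℝ (⊤ : ℕ∞) w Ω) {q} (hq : q ∈ Ω) : DifferentiableAt ℝ w q :=
    (smooth hw hq).differentiableAt two_ne_zero
  have hlamφ k : lam k p - φ p ≠ 0 := sub_ne_zero.2 (hφlam k p hp).symm
  have hLφ k : DifferentiableAt ℝ (Lder ξ k φ) p :=
    differentiableAt_lder k (smooth hφ hp) (diff (hξ k) hp)
  have hgap k : DifferentiableAt ℝ (fun q => lam k q - φ q) p :=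
    (diff (hlam k) hp).fun_sub (diff hφ hp)
  have ha k : DifferentiableAt ℝ (fun q => Lder ξ k φ q / (lam k q - φ q)) p := by
    simpa only [div_eq_mul_inv] using (hLφ k).fun_mul ((hgap k).fun_inv (hlamφ k))
  have hquot k l : Lder ξ l (fun q => Lder ξ k φ q / (lam k q - φ q)) p
      = ((lam k p - φ p) * Lder ξ l (Lder ξ k φ) p
          - Lder ξ k φ p * (Lder ξ l (lam k) p - Lder ξ l φ p)) / (lam k p - φ p) ^ 2 := by
    rw [lder_div l (hLφ k) (hgap k) (hlamφ k), lder_sub l (diff (hlam k) hp) (diff hφ hp)]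
  have hha : ∀ᶠ q in 𝓝 p, ∀ k,
      Lder ξ k h q = h q * (Lder ξ k φ q / (lam k q - φ q)) := by
    filter_upwards [hΩ.mem_nhds hp] with q hq k
    exact lder_eq_mul_div_of_lder_mul_eq k (diff hφ hq) (diff hh hq) (hφlam k q hq) (hcl k q hq)
  have hclosed := lder_sub_lder_eq_sum_of_lder_eq_mul (smooth hh hp) (diff (hξ i) hp)
    (diff (hξ j) hp) (hc i j p hp) (ha i) (ha j) hha (hh0 p hp)
  rw [hquot, hquot] at hclosed
  rw [sum_mul_div_mul_div_eq _ _ _ _ _ _ fun k => hφlam k p hp]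
  exact eq_of_sub_eq_of_div_sub_div_eq (hφlam i p hp) (hφlam j p hp) (hdist i j hij p hp)
    (lder_lder_sub_lder_lder (smooth hφ hp) (diff (hξ i) hp) (diff (hξ j) hp) (hc i j p hp))
    hclosed

/-- if `h` is nonvanishing, `φ ≠ λ^i`, `g = φ·h` and `L_i g = λ^i L_i h`,
then `φ` satisfies the nonlinear second-order system (5). -/
theorem stmt1 {n : ℕ} (Ω : Set (Fin n → ℝ)) (hΩ : IsOpen Ω)
    (ξ : Fin n → (Fin n → ℝ) → (Fin n → ℝ))
    (hξ : ∀ i, ContDiffOn ℝ (⊤ : ℕ∞) (ξ i) Ω)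
    (hind : ∀ p ∈ Ω, LinearIndependent ℝ (fun i => ξ i p))
    (c : Fin n → Fin n → Fin n → (Fin n → ℝ) → ℝ)
    (hc : ∀ i j, ∀ p ∈ Ω,
      fderiv ℝ (ξ j) p (ξ i p) - fderiv ℝ (ξ i) p (ξ j p) = ∑ k, c i j k p • ξ k p)
    (lam : Fin n → (Fin n → ℝ) → ℝ)
    (hlam : ∀ i, ContDiffOn ℝ (⊤ : ℕ∞) (lam i) Ω)
    (hdist : ∀ i j, i ≠ j → ∀ p ∈ Ω, lam i p ≠ lam j p)
    (h φ : (Fin n → ℝ) → ℝ)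
    (hh : ContDiffOn ℝ (⊤ : ℕ∞) h Ω) (hφ : ContDiffOn ℝ (⊤ : ℕ∞) φ Ω)
    (hh0 : ∀ p ∈ Ω, h p ≠ 0)
    (hφlam : ∀ i, ∀ p ∈ Ω, φ p ≠ lam i p)
    (hcl : ∀ i, ∀ p ∈ Ω,
      Lder ξ i (fun q => φ q * h q) p = lam i p * Lder ξ i h p) :
    ∀ i j, i ≠ j → ∀ p ∈ Ω,
      Lder ξ i (Lder ξ j φ) p
        = (1 / (φ p - lam i p) + 1 / (φ p - lam j p)) * (Lder ξ i φ p * Lder ξ j φ p)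
          + (Lder ξ j (lam i) p / (lam j p - lam i p))
            * ((φ p - lam j p) / (φ p - lam i p)) * Lder ξ i φ p
          + (Lder ξ i (lam j) p / (lam i p - lam j p))
            * ((φ p - lam i p) / (φ p - lam j p)) * Lder ξ j φ p
          + ∑ k, c i j k p * ((lam i p - lam k p) / (lam i p - lam j p))
            * ((φ p - lam j p) / (φ p - lam k p)) * Lder ξ k φ p :=
  stmt1_general Ω hΩ ξ hξ c hc lam hlam hdist h φ hh hφ hh0 hφlam hcl
end

section
/- Let u^1,…,u^n denote the coordinate functions on Ω, and let f^1,…,f^n be smooth functions with L_j f^s = λ^j L_j u^s for all j, s. Let φ be a smooth function with φ(p) ≠ λ^i(p) for all i, p, and define r : Ω → ℝ^{n+1} by r = (φ, u^1 φ − f^1, …, u^n φ − f^n). Then the following are equivalent: (a) for all i ≠ j and every p ∈ Ω, L_i L_j r(p) lies in the linear span of L_1 r(p),…,L_n r(p); (b) φ satisfies, for all i ≠ j, the nonlinear system L_i L_j φ = (1/(φ − λ^i) + 1/(φ − λ^j)) L_i φ · L_j φ + (L_j λ^i/(λ^j − λ^i))·((φ − λ^j)/(φ − λ^i))·L_i φ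 + (L_i λ^j/(λ^i − λ^j))·((φ − λ^i)/(φ − λ^j))·L_j φ + Σ_k c^k_{ij}·((λ^i − λ^k)/(λ^i − λ^j))·((φ − λ^j)/(φ − λ^k))·L_k φ. (This is the condition that the hypersurface r(Ω) is conjugate to the congruence y^i = u^i y^0 − f^i.) -/
/-
Put `F = (f¹, …, fⁿ)`, so that `r q = (φ q, φ q • q - F q)`; the hypothesis on `f` says
`L_k F = λ^k ξ_k`. Hence `L_k r = (L_k φ, L_k φ • q + (φ - λ^k) ξ_k)` and
`L_i L_j r = (L_i L_j φ, L_i L_j φ • q + w)` with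
`w = L_j φ ξ_i + (L_i φ - L_i λ^j) ξ_j + (φ - λ^j) L_i ξ_j`.
Undoing the shear `(x, y) ↦ (y, y • q + x)`, the tangent vectors span the graph of the linear form
`ψ` with `ψ ξ_k = L_k φ / (φ - λ^k)`, so `L_i L_j r` is tangent iff `L_i L_j φ = ψ w`.
Symmetry of the second derivative of `F` gives
`(λ^j - λ^i) L_i ξ_j = ∑ c^k_{ij} (λ^k - λ^i) ξ_k + L_j λ^i ξ_i - L_i λ^j ξ_j`,
and evaluating `ψ w` with it yields the right-hand side of the system.
-/

open Module Submodule Set Filter Topology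

theorem prod_mem_span_range_graph_iff {R M N ι : Type*} [Semiring R] [AddCommMonoid M]
    [AddCommMonoid N] [Module R M] [Module R N] (f : M →ₗ[R] N) (v : ι → M) (x : M) (y : N) :
    (x, y) ∈ span R (range fun k => (v k, f (v k))) ↔ x ∈ span R (range v) ∧ y = f x := by
  rw [show (range fun k => (v k, f (v k))) = (LinearMap.id.prod f) '' range v by
    rw [← range_comp]; rfl, span_image, Submodule.mem_map]
  constructor
  · rintro ⟨z, hz, hzxy⟩
    obtain ⟨rfl, rfl⟩ := Prod.ext_iff.mp hzxy
    exact ⟨hz, rfl⟩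
  · rintro ⟨hx, rfl⟩
    exact ⟨x, hx, rfl⟩

theorem Module.Basis.prod_mem_span_smul_iff {K E ι : Type*} [Field K] [AddCommGroup E]
    [Module K E] (b : Basis ι K E) {α β : ι → K} (hβ : ∀ k, β k ≠ 0) (x : E) (y : K) :
    (x, y) ∈ span K (range fun k => (β k • b k, α k))
      ↔ y = b.constr K (fun k => α k / β k) x := by
  set ψ := b.constr K fun k => α k / β k
  have hα : (fun k => (β k • b k, α k)) = fun k => (β k • b k, ψ (β k • b k)) := funext fun k => by
    rw [map_smul, b.constr_basis, smul_eq_mul, mul_div_cancel₀ _ (hβ k)]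
  have hspan : span K (range fun k => β k • b k) = ⊤ := by
    rw [← (b.isUnitSMul fun k => (hβ k).isUnit).span_eq]
    exact congrArg (span K ∘ range) (funext fun k => (b.isUnitSMul_apply _ k).symm)
  rw [hα, prod_mem_span_range_graph_iff, hspan]
  exact and_iff_right mem_top

def consShear {R : Type*} [CommRing R] {n : ℕ} (u : Fin n → R) :
    (Fin n → R) × R →ₗ[R] Fin (n + 1) → R :=
  (LinearMap.snd R _ _).vecCons ((LinearMap.snd R _ _).smulRight u + LinearMap.fst R _ _)

theorem consShear_apply {R : Type*} [CommRing R] {n : ℕ} (u x : Fin n → R) (y : R) :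
    consShear u (x, y) = Matrix.vecCons y (y • u + x) := rfl

theorem consShear_injective {R : Type*} [CommRing R] {n : ℕ} (u : Fin n → R) :
    Function.Injective (consShear u) := by
  rintro ⟨x, y⟩ ⟨x', y'⟩ h
  rw [consShear_apply, consShear_apply, Matrix.vecCons_inj] at h
  obtain ⟨rfl, h⟩ := h
  rw [add_left_cancel h]

theorem vecCons_mul_sub_eq_consShear {R : Type*} [CommRing R] {n : ℕ} (u x : Fin n → R) (y : R) :
    Matrix.vecCons y (fun s => u s * y - x s) = consShear u (-x, y) := by
  rw [consShear_apply]
  congr 1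
  funext s
  simp only [Pi.add_apply, Pi.smul_apply, Pi.neg_apply, smul_eq_mul]
  ring

theorem consShear_mem_span_iff {K : Type*} [Field K] {n : ℕ} (b : Basis (Fin n) K (Fin n → K))
    {α β : Fin n → K} (hβ : ∀ k, β k ≠ 0) (u x : Fin n → K) (y : K) :
    consShear u (x, y) ∈ span K (range fun k => consShear u (β k • b k, α k))
      ↔ y = b.constr K (fun k => α k / β k) x := by
  rw [range_comp' (consShear u), apply_mem_span_image_iff_mem_span (consShear_injective u),
    b.prod_mem_span_smul_iff hβ]

variable {n : ℕ} {ξ : Fin n → (Fin n → ℝ) → (Fin n → ℝ)} {p : Fin n → ℝ}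

namespace Lder

variable {k : Fin n} {F : Type*} [NormedAddCommGroup F] [NormedSpace ℝ F]

theorem congr_of_eventuallyEq {v w : (Fin n → ℝ) → F} (h : v =ᶠ[𝓝 p] w) :
    Lder ξ k v p = Lder ξ k w p := by
  simp only [Lder, h.fderiv_eq]

theorem add {v w : (Fin n → ℝ) → F} (hv : DifferentiableAt ℝ v p)
    (hw : DifferentiableAt ℝ w p) :
    Lder ξ k (fun q => v q + w q) p = Lder ξ k v p + Lder ξ k w p := by
  simp only [Lder, fderiv_fun_add hv hw, add_apply]

theorem sub {v w : (Fin n → ℝ) → F} (hv : DifferentiableAt ℝ v p)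
    (hw : DifferentiableAt ℝ w p) :
    Lder ξ k (fun q => v q - w q) p = Lder ξ k v p - Lder ξ k w p := by
  simp only [Lder, fderiv_fun_sub hv hw, sub_apply]

theorem neg {w : (Fin n → ℝ) → F} : Lder ξ k (fun q => -w q) p = -Lder ξ k w p := by
  simp only [Lder, fderiv_fun_neg, neg_apply]

theorem smul {g : (Fin n → ℝ) → ℝ} {w : (Fin n → ℝ) → F} (hg : DifferentiableAt ℝ g p)
    (hw : DifferentiableAt ℝ w p) :
    Lder ξ k (fun q => g q • w q) p = Lder ξ k g p • w p + g p • Lder ξ k w p := by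
  simp only [Lder, fderiv_fun_smul hg hw, add_apply,
    smul_apply, ContinuousLinearMap.smulRight_apply]
  abel

theorem fun_id : Lder ξ k (fun q => q) p = ξ k p := by
  simp [Lder]

theorem pi {m : ℕ} {w : Fin m → (Fin n → ℝ) → ℝ} (hw : ∀ s, DifferentiableAt ℝ (w s) p) :
    Lder ξ k (fun q s => w s q) p = fun s => Lder ξ k (w s) p := by
  simp only [Lder, fderiv_pi hw]; rfl

theorem vecCons {m : ℕ} {g : (Fin n → ℝ) → ℝ} {w : (Fin n → ℝ) → Fin m → ℝ}
    (hg : DifferentiableAt ℝ g p) (hw : DifferentiableAt ℝ w p) :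
    Lder ξ k (fun q => Matrix.vecCons (g q) (w q)) p
      = Matrix.vecCons (Lder ξ k g p) (Lder ξ k w p) :=
  DFunLike.congr_fun (hg.hasFDerivAt.finCons (F' := fun _ => ℝ) hw.hasFDerivAt).fderiv _

theorem differentiableAt {w : (Fin n → ℝ) → F} (hw : ContDiffAt ℝ 2 w p)
    (hξ : DifferentiableAt ℝ (ξ k) p) : DifferentiableAt ℝ (Lder ξ k w) p :=
  ((hw.fderiv_right (m := 1) (by norm_num)).differentiableAt one_ne_zero).clm_apply hξ

theorem sub_swap {i j : Fin n} {w : (Fin n → ℝ) → F} (hw : ContDiffAt ℝ 2 w p)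
    (hi : DifferentiableAt ℝ (ξ i) p) (hj : DifferentiableAt ℝ (ξ j) p) :
    Lder ξ i (Lder ξ j w) p - Lder ξ j (Lder ξ i w) p
      = fderiv ℝ w p (Lder ξ i (ξ j) p - Lder ξ j (ξ i) p) := by
  have hD := (hw.fderiv_right (m := 1) (by norm_num)).differentiableAt one_ne_zero
  have hsymm := hw.isSymmSndFDerivAt (by simp [minSmoothness_of_isRCLikeNormedField])
  unfold Lder
  simp only [fderiv_clm_apply hD hj, fderiv_clm_apply hD hi, add_apply,
    ContinuousLinearMap.comp_apply, ContinuousLinearMap.flip_apply, hsymm (ξ i p) (ξ j p), map_sub]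
  abel

theorem apply_coord (s : Fin n) : Lder ξ k (fun q => q s) p = ξ k p s := by
  rw [← congrFun (pi (w := fun s q => q s) fun s => differentiableAt_apply s p) s, fun_id]

theorem consShear_self {g : (Fin n → ℝ) → ℝ} {w : (Fin n → ℝ) → Fin n → ℝ}
    (hg : DifferentiableAt ℝ g p) (hw : DifferentiableAt ℝ w p) :
    Lder ξ k (fun q => consShear q (w q, g q)) p
      = consShear p (g p • ξ k p + Lder ξ k w p, Lder ξ k g p) := by
  have hgq : DifferentiableAt ℝ (fun q => g q • q) p := hg.smul differentiableAt_id
  simp only [consShear_apply]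
  rw [vecCons hg (hgq.fun_add hw), add hgq hw, smul (w := fun q => q) hg differentiableAt_id, fun_id]
  congr 1
  abel

end Lder

theorem Lder_pi_eq_smul {k : Fin n} {f : Fin n → (Fin n → ℝ) → ℝ} {μ : ℝ}
    (hf : ∀ s, DifferentiableAt ℝ (f s) p)
    (h : ∀ s, Lder ξ k (f s) p = μ * Lder ξ k (fun q => q s) p) :
    Lder ξ k (fun q s => f s q) p = μ • ξ k p := by
  rw [Lder.pi hf]
  funext s
  rw [h s, Lder.apply_coord]
  rfl

theorem Lder_consShear_neg {k : Fin n} {φ : (Fin n → ℝ) → ℝ} {F : (Fin n → ℝ) → Fin n → ℝ}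
    {μ : ℝ} (hφ : DifferentiableAt ℝ φ p) (hF : DifferentiableAt ℝ F p)
    (hFk : Lder ξ k F p = μ • ξ k p) :
    Lder ξ k (fun q => consShear q (-F q, φ q)) p = consShear p ((φ p - μ) • ξ k p, Lder ξ k φ p) := by
  rw [Lder.consShear_self hφ hF.fun_neg, Lder.neg, hFk, sub_smul, sub_eq_add_neg]

theorem Lder_Lder_eq_consShear {i j : Fin n} {R : (Fin n → ℝ) → Fin (n + 1) → ℝ}
    {φ μ : (Fin n → ℝ) → ℝ} (hφ : ContDiffAt ℝ 2 φ p) (hμ : DifferentiableAt ℝ μ p)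
    (hξj : DifferentiableAt ℝ (ξ j) p)
    (hR : ∀ᶠ q in 𝓝 p, Lder ξ j R q = consShear q ((φ q - μ q) • ξ j q, Lder ξ j φ q)) :
    Lder ξ i (Lder ξ j R) p = consShear p (Lder ξ j φ p • ξ i p
      + ((Lder ξ i φ p - Lder ξ i μ p) • ξ j p + (φ p - μ p) • Lder ξ i (ξ j) p),
      Lder ξ i (Lder ξ j φ) p) := by
  have hφ' := hφ.differentiableAt two_ne_zero
  have hφμ := hφ'.fun_sub hμ
  rw [Lder.congr_of_eventuallyEq hR,
    Lder.consShear_self (Lder.differentiableAt hφ hξj) (hφμ.fun_smul hξj),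
    Lder.smul hφμ hξj, Lder.sub hφ' hμ]

theorem smul_Lder_eq_of_Lder_eq_smul {F : (Fin n → ℝ) → Fin n → ℝ} {lam : Fin n → (Fin n → ℝ) → ℝ}
    {c : Fin n → ℝ} {i j : Fin n} (hF : ContDiffAt ℝ 2 F p)
    (hξi : DifferentiableAt ℝ (ξ i) p) (hξj : DifferentiableAt ℝ (ξ j) p)
    (hlami : DifferentiableAt ℝ (lam i) p) (hlamj : DifferentiableAt ℝ (lam j) p)
    (heig : ∀ᶠ q in 𝓝 p, ∀ k, Lder ξ k F q = lam k q • ξ k q)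
    (hc : Lder ξ i (ξ j) p - Lder ξ j (ξ i) p = ∑ k, c k • ξ k p) :
    (lam j p - lam i p) • Lder ξ i (ξ j) p
      = ∑ k, (c k * (lam k p - lam i p)) • ξ k p
        + Lder ξ j (lam i) p • ξ i p - Lder ξ i (lam j) p • ξ j p := by
  have hLF : ∀ k, Lder ξ k F =ᶠ[𝓝 p] fun q => lam k q • ξ k q := fun k =>
    heig.mono fun q hq => hq k
  have hcomm := Lder.sub_swap hF hξi hξj
  rw [Lder.congr_of_eventuallyEq (hLF j), Lder.congr_of_eventuallyEq (hLF i),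
    Lder.smul hlamj hξj, Lder.smul hlami hξi, hc, map_sum] at hcomm
  have hsum : ∑ k, fderiv ℝ F p (c k • ξ k p) = ∑ k, (c k * lam k p) • ξ k p :=
    Finset.sum_congr rfl fun k _ => by
      rw [map_smul, show fderiv ℝ F p (ξ k p) = Lder ξ k F p from rfl, heig.self_of_nhds k,
        smul_smul]
  have hsplit : ∑ k, (c k * (lam k p - lam i p)) • ξ k p
      = ∑ k, (c k * lam k p) • ξ k p - lam i p • ∑ k, c k • ξ k p := by
    simp only [mul_sub, sub_smul, Finset.sum_sub_distrib, Finset.smul_sum, smul_smul, mul_comm]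
  rw [hsum] at hcomm
  rw [hsplit]
  linear_combination (norm := module) hcomm - lam i p • hc

theorem consShear_mem_span_iff_eq {u D : Fin n → ℝ} {e : Fin n → Fin n → ℝ}
    (he : LinearIndependent ℝ e) {i j : Fin n} {φ γ dlami dlamj : ℝ} {a lam c : Fin n → ℝ}
    (hlam : lam i ≠ lam j) (hφ : ∀ k, φ ≠ lam k)
    (hD : (lam j - lam i) • D = ∑ k, (c k * (lam k - lam i)) • e k + dlami • e i - dlamj • e j) :
    consShear u (a j • e i + ((a i - dlamj) • e j + (φ - lam j) • D), γ)
        ∈ span ℝ (range fun k => consShear u ((φ - lam k) • e k, a k))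
      ↔ γ = (1 / (φ - lam i) + 1 / (φ - lam j)) * (a i * a j)
          + (dlami / (lam j - lam i)) * ((φ - lam j) / (φ - lam i)) * a i
          + (dlamj / (lam i - lam j)) * ((φ - lam i) / (φ - lam j)) * a j
          + ∑ k, c k * ((lam i - lam k) / (lam i - lam j)) * ((φ - lam j) / (φ - lam k)) * a k := by
  have hβ : ∀ k, φ - lam k ≠ 0 := fun k => sub_ne_zero.mpr (hφ k)
  have : Nonempty (Fin n) := ⟨i⟩
  have hcard : Fintype.card (Fin n) = finrank ℝ (Fin n → ℝ) := by simp
  set b := basisOfLinearIndependentOfCardEqFinrank he hcard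
  have hb : ⇑b = e := coe_basisOfLinearIndependentOfCardEqFinrank he hcard
  rw [← hb, consShear_mem_span_iff b hβ, hb]
  set ψ := b.constr ℝ fun k => a k / (φ - lam k)
  have hψ : ∀ k, ψ (e k) = a k / (φ - lam k) := fun k => by
    rw [← hb, b.constr_basis]
  have hψD := congrArg ψ hD
  simp only [map_add, map_sub, map_smul, map_sum, hψ, smul_eq_mul] at hψD ⊢
  have hδ : lam j - lam i ≠ 0 := sub_ne_zero.mpr hlam.symm
  have hδ' : lam i - lam j ≠ 0 := sub_ne_zero.mpr hlam
  have hsum : ∑ k, c k * ((lam i - lam k) / (lam i - lam j)) * ((φ - lam j) / (φ - lam k)) * a k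
      = (φ - lam j) / (lam j - lam i) * ∑ k, c k * (lam k - lam i) * (a k / (φ - lam k)) := by
    rw [Finset.mul_sum]
    refine Finset.sum_congr rfl fun k _ => ?_
    field_simp [hβ k]
    ring
  rw [hsum]
  have hD' : ψ D = (∑ k, c k * (lam k - lam i) * (a k / (φ - lam k)) + dlami * (a i / (φ - lam i))
      - dlamj * (a j / (φ - lam j))) / (lam j - lam i) := by
    rw [eq_div_iff hδ, mul_comm, hψD]
  rw [hD']
  refine iff_of_eq (congrArg (γ = ·) ?_)
  generalize ∑ k, c k * (lam k - lam i) * (a k / (φ - lam k)) = S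
  field_simp [hβ i, hβ j]
  ring

theorem ContDiffOn.contDiffAt_two {F : Type*} [NormedAddCommGroup F] [NormedSpace ℝ F]
    {Ω : Set (Fin n → ℝ)} {g : (Fin n → ℝ) → F} (hg : ContDiffOn ℝ (⊤ : ℕ∞) g Ω)
    (hΩ : IsOpen Ω) (hp : p ∈ Ω) : ContDiffAt ℝ 2 g p :=
  (hg.contDiffAt (hΩ.mem_nhds hp)).of_le (WithTop.coe_le_coe.mpr le_top)

/-- the hypersurface `r = (φ, u¹φ − f¹, …, uⁿφ − fⁿ)` is conjugate to the
congruence `y^i = u^i y^0 − f^i` (i.e. `L_i L_j r` is tangential for `i ≠ j`) if and only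
if `φ` satisfies the nonlinear system (5). -/
theorem stmt2 {n : ℕ} (Ω : Set (Fin n → ℝ)) (hΩ : IsOpen Ω)
    (ξ : Fin n → (Fin n → ℝ) → (Fin n → ℝ))
    (hξ : ∀ i, ContDiffOn ℝ (⊤ : ℕ∞) (ξ i) Ω)
    (hind : ∀ p ∈ Ω, LinearIndependent ℝ (fun i => ξ i p))
    (c : Fin n → Fin n → Fin n → (Fin n → ℝ) → ℝ)
    (hc : ∀ i j, ∀ p ∈ Ω,
      fderiv ℝ (ξ j) p (ξ i p) - fderiv ℝ (ξ i) p (ξ j p) = ∑ k, c i j k p • ξ k p)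
    (lam : Fin n → (Fin n → ℝ) → ℝ)
    (hlam : ∀ i, ContDiffOn ℝ (⊤ : ℕ∞) (lam i) Ω)
    (hdist : ∀ i j, i ≠ j → ∀ p ∈ Ω, lam i p ≠ lam j p)
    (f : Fin n → (Fin n → ℝ) → ℝ)
    (hf : ∀ s, ContDiffOn ℝ (⊤ : ℕ∞) (f s) Ω)
    (hcons : ∀ j s, ∀ p ∈ Ω,
      Lder ξ j (f s) p = lam j p * Lder ξ j (fun q => q s) p)
    (φ : (Fin n → ℝ) → ℝ) (hφ : ContDiffOn ℝ (⊤ : ℕ∞) φ Ω)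
    (hφlam : ∀ i, ∀ p ∈ Ω, φ p ≠ lam i p)
    (r : (Fin n → ℝ) → (Fin (n + 1) → ℝ))
    (hr : r = fun p => Matrix.vecCons (φ p) (fun s => p s * φ p - f s p)) :
    (∀ i j, i ≠ j → ∀ p ∈ Ω,
        Lder ξ i (Lder ξ j r) p ∈ Submodule.span ℝ (Set.range fun k => Lder ξ k r p))
      ↔
    (∀ i j, i ≠ j → ∀ p ∈ Ω,
      Lder ξ i (Lder ξ j φ) p
        = (1 / (φ p - lam i p) + 1 / (φ p - lam j p)) * (Lder ξ i φ p * Lder ξ j φ p)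
          + (Lder ξ j (lam i) p / (lam j p - lam i p))
            * ((φ p - lam j p) / (φ p - lam i p)) * Lder ξ i φ p
          + (Lder ξ i (lam j) p / (lam i p - lam j p))
            * ((φ p - lam i p) / (φ p - lam j p)) * Lder ξ j φ p
          + ∑ k, c i j k p * ((lam i p - lam k p) / (lam i p - lam j p))
            * ((φ p - lam j p) / (φ p - lam k p)) * Lder ξ k φ p) := by
  refine forall₂_congr fun i j => imp_congr_right fun hij => forall₂_congr fun p hp => ?_
  have hU := hΩ.mem_nhds hp
  have smooth : ∀ {g : (Fin n → ℝ) → ℝ}, ContDiffOn ℝ (⊤ : ℕ∞) g Ω → ∀ q ∈ Ω,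
      DifferentiableAt ℝ g q := fun hg q hq => (hg.contDiffAt_two hΩ hq).differentiableAt two_ne_zero
  have hξ' : ∀ k, DifferentiableAt ℝ (ξ k) p := fun k =>
    ((hξ k).contDiffAt_two hΩ hp).differentiableAt two_ne_zero
  set F : (Fin n → ℝ) → Fin n → ℝ := fun q s => f s q
  have hF : ∀ q ∈ Ω, ContDiffAt ℝ 2 F q := fun q hq =>
    contDiffAt_pi.mpr fun s => (hf s).contDiffAt_two hΩ hq
  have hflux : ∀ q ∈ Ω, ∀ k, Lder ξ k F q = lam k q • ξ k q := fun q hq k =>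
    Lder_pi_eq_smul (fun s => smooth (hf s) q hq) (hcons k · q hq)
  have hr' : r = fun q => consShear q (-F q, φ q) := by
    rw [hr]
    exact funext fun q => vecCons_mul_sub_eq_consShear q (F q) (φ q)
  have hLr : ∀ᶠ q in 𝓝 p, ∀ k, Lder ξ k r q = consShear q ((φ q - lam k q) • ξ k q, Lder ξ k φ q) :=
    eventually_of_mem hU fun q hq k => hr' ▸ Lder_consShear_neg (smooth hφ q hq)
      ((hF q hq).differentiableAt two_ne_zero) (hflux q hq k)
  have hframe := smul_Lder_eq_of_Lder_eq_smul (hF p hp) (hξ' i) (hξ' j) (smooth (hlam i) p hp)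
    (smooth (hlam j) p hp) (eventually_of_mem hU hflux) (hc i j p hp)
  rw [Lder_Lder_eq_consShear (hφ.contDiffAt_two hΩ hp) (smooth (hlam j) p hp) (hξ' j)
      (hLr.mono fun q hq => hq j), show (fun k => Lder ξ k r p) = _ from funext hLr.self_of_nhds]
  exact consShear_mem_span_iff_eq (a := fun k => Lder ξ k φ p) (hind p hp)
    (hdist i j hij p hp) (hφlam · p hp) hframe
end

section
/- Let λ^1,…,λ^n and μ^1,…,μ^n be smooth on Ω with λ^i ≠ λ^j and μ^i ≠ μ^j pointwise for i ≠ j. Suppose each coordinate function u^s (s = 1,…,n) satisfies, for all i ≠ j, both L_i L_j u^s = (L_j λ^i/(λ^j − λ^i)) L_i u^s + (L_i λ^j/(λ^i − λ^j)) L_j u^s + Σ_k c^k_{ij} ((λ^i − λ^k)/(λ^i − λ^j)) L_k u^s and the same identity with every λ replaced by μ. Then: (i) L_j μ^i/(μ^j − μ^i) = L_j λ^i/(λ^j − λ^i) for all i ≠ j; and (ii) c^k_{ij}·((μ^i − μ^k)/(μ^i − μ^j) − (λ^i − λ^k)/(λ^i − λ^j)) = 0 for all pairwise distinct i, j, k.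 -/
lemma Lder_coord {n : ℕ} (ξ : Fin n → (Fin n → ℝ) → (Fin n → ℝ)) (k s : Fin n)
    (p : Fin n → ℝ) : Lder ξ k (fun q => q s) p = ξ k p s := by
  have : (fun q : Fin n → ℝ => q s)
      = (ContinuousLinearMap.proj s : (Fin n → ℝ) →L[ℝ] ℝ) := rfl
  simp only [Lder, this, ContinuousLinearMap.fderiv]
  rfl

/-- if the coordinate functions `u^s` satisfy the second-order system (3)
both for `λ` and for `μ`, then (i) `L_j μ^i/(μ^j−μ^i) = L_j λ^i/(λ^j−λ^i)` for `i ≠ j`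
and (ii) `c^k_{ij}((μ^i−μ^k)/(μ^i−μ^j) − (λ^i−λ^k)/(λ^i−λ^j)) = 0` for distinct `i,j,k`. -/
theorem stmt4 {n : ℕ} (Ω : Set (Fin n → ℝ)) (hΩ : IsOpen Ω)
    (ξ : Fin n → (Fin n → ℝ) → (Fin n → ℝ))
    (hξ : ∀ i, ContDiffOn ℝ (⊤ : ℕ∞) (ξ i) Ω)
    (hind : ∀ p ∈ Ω, LinearIndependent ℝ (fun i => ξ i p))
    (c : Fin n → Fin n → Fin n → (Fin n → ℝ) → ℝ)
    (hc : ∀ i j, ∀ p ∈ Ω,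
      fderiv ℝ (ξ j) p (ξ i p) - fderiv ℝ (ξ i) p (ξ j p) = ∑ k, c i j k p • ξ k p)
    (lam mu : Fin n → (Fin n → ℝ) → ℝ)
    (hlam : ∀ i, ContDiffOn ℝ (⊤ : ℕ∞) (lam i) Ω)
    (hmu : ∀ i, ContDiffOn ℝ (⊤ : ℕ∞) (mu i) Ω)
    (hlamdist : ∀ i j, i ≠ j → ∀ p ∈ Ω, lam i p ≠ lam j p)
    (hmudist : ∀ i j, i ≠ j → ∀ p ∈ Ω, mu i p ≠ mu j p)
    (hulam : ∀ s : Fin n, ∀ i j, i ≠ j → ∀ p ∈ Ω,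
      Lder ξ i (Lder ξ j (fun q => q s)) p
        = (Lder ξ j (lam i) p / (lam j p - lam i p)) * Lder ξ i (fun q => q s) p
          + (Lder ξ i (lam j) p / (lam i p - lam j p)) * Lder ξ j (fun q => q s) p
          + ∑ k, c i j k p * ((lam i p - lam k p) / (lam i p - lam j p))
              * Lder ξ k (fun q => q s) p)
    (humu : ∀ s : Fin n, ∀ i j, i ≠ j → ∀ p ∈ Ω,
      Lder ξ i (Lder ξ j (fun q => q s)) p
        = (Lder ξ j (mu i) p / (mu j p - mu i p)) * Lder ξ i (fun q => q s) p
          + (Lder ξ i (mu j) p / (mu i p - mu j p)) * Lder ξ j (fun q => q s) p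
          + ∑ k, c i j k p * ((mu i p - mu k p) / (mu i p - mu j p))
              * Lder ξ k (fun q => q s) p) :
    (∀ i j, i ≠ j → ∀ p ∈ Ω,
        Lder ξ j (mu i) p / (mu j p - mu i p) = Lder ξ j (lam i) p / (lam j p - lam i p))
      ∧
    (∀ i j k, i ≠ j → j ≠ k → i ≠ k → ∀ p ∈ Ω,
        c i j k p * ((mu i p - mu k p) / (mu i p - mu j p)
          - (lam i p - lam k p) / (lam i p - lam j p)) = 0) := by
  have key : ∀ i j, i ≠ j → ∀ p ∈ Ω, ∀ k : Fin n,
      (if k = i then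
          Lder ξ j (mu i) p / (mu j p - mu i p) - Lder ξ j (lam i) p / (lam j p - lam i p)
        else 0)
      + (if k = j then
          Lder ξ i (mu j) p / (mu i p - mu j p) - Lder ξ i (lam j) p / (lam i p - lam j p)
        else 0)
      + c i j k p * ((mu i p - mu k p) / (mu i p - mu j p)
          - (lam i p - lam k p) / (lam i p - lam j p)) = 0 := by
    intro i j hij p hp
    set d : Fin n → ℝ := fun k =>
      (if k = i then
          Lder ξ j (mu i) p / (mu j p - mu i p) - Lder ξ j (lam i) p / (lam j p - lam i p)
        else 0)
      + (if k = j then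
          Lder ξ i (mu j) p / (mu i p - mu j p) - Lder ξ i (lam j) p / (lam i p - lam j p)
        else 0)
      + c i j k p * ((mu i p - mu k p) / (mu i p - mu j p)
          - (lam i p - lam k p) / (lam i p - lam j p)) with hd
    have hsum : ∑ k, d k • (fun i => ξ i p) k = 0 := by
      funext s
      have h1 := hulam s i j hij p hp
      have h2 := humu s i j hij p hp
      simp only [Lder_coord] at h1 h2
      have hthis := h2.symm.trans h1
      have hsplit : ∑ k, c i j k p * ((mu i p - mu k p) / (mu i p - mu j p)
            - (lam i p - lam k p) / (lam i p - lam j p)) * ξ k p s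
          = (∑ k, c i j k p * ((mu i p - mu k p) / (mu i p - mu j p)) * ξ k p s)
            - ∑ k, c i j k p * ((lam i p - lam k p) / (lam i p - lam j p)) * ξ k p s := by
        rw [← Finset.sum_sub_distrib]
        exact Finset.sum_congr rfl (fun k _ => by ring)
      simp only [Finset.sum_apply, Pi.smul_apply, Pi.zero_apply, smul_eq_mul, hd,
        add_mul, ite_mul, zero_mul, Finset.sum_add_distrib, Finset.sum_ite_eq',
        Finset.mem_univ, if_true]
      rw [hsplit]
      linarith [hthis]
    exact Fintype.linearIndependent_iff.mp (hind p hp) d hsum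
  constructor
  · intro i j hij p hp
    have h := key i j hij p hp i
    simp only [if_pos rfl, if_true, if_neg hij, sub_self, zero_div, sub_zero, zero_sub,
      add_zero, mul_zero] at h
    linarith
  · intro i j k hij hjk hik p hp
    have h := key i j hij p hp k
    simp only [if_neg (Ne.symm hik), if_neg (Ne.symm hjk), zero_add] at h
    exact h
end

section
/- Let n = 3 and let Ω ⊆ ℝ^3 be open and connected. Let λ^1, λ^2, λ^3 and μ^1, μ^2, μ^3 be smooth on Ω with λ^i ≠ λ^j and μ^i ≠ μ^j pointwise for i ≠ j. Assume: (i) L_j μ^i/(μ^j − μ^i) = L_j λ^i/(λ^j − λ^i) for all i ≠ j; (ii) c^k_{ij}·((μ^i − μ^k)/(μ^i − μ^j) − (λ^i − λ^k)/(λ^i − λ^j)) = 0 for all pairwise distinct i, j, k; and (iii) for some pairwise distinct indices i₀, j₀, k₀ the coefficient c^{k₀}_{i₀ j₀} is nonzero at every point of Ω. Then there exist constants a, b ∈ ℝ such that μ^i = b·λ^i − a on Ω for i = 1, 2, 3 (so the commuting flow is trivial). -/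
open Filter Topology

lemma Fin.eq_or_eq_or_eq_of_ne {i₀ j₀ k₀ : Fin 3} (hij : i₀ ≠ j₀) (hjk : j₀ ≠ k₀)
    (hik : i₀ ≠ k₀) (i : Fin 3) : i = i₀ ∨ i = j₀ ∨ i = k₀ := by
  revert i₀ j₀ k₀ i; decide

lemma exists_ne_ne_of_three_le_card {ι : Type*} [Fintype ι] (hι : 3 ≤ Fintype.card ι) (j : ι) :
    ∃ i₁ i₂, i₁ ≠ j ∧ i₂ ≠ j ∧ i₁ ≠ i₂ := by
  classical
  have : 1 < (Finset.univ.erase j).card := by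
    rw [Finset.card_erase_of_mem (Finset.mem_univ j), Finset.card_univ]; omega
  obtain ⟨i₁, h₁, i₂, h₂, hne⟩ := Finset.one_lt_card.1 this
  exact ⟨i₁, i₂, Finset.ne_of_mem_erase h₁, Finset.ne_of_mem_erase h₂, hne⟩

section Field

variable {K : Type*} [Field K]

lemma eq_mul_add_of_div_eq_div {l m : Fin 3 → K} {i₀ j₀ k₀ : Fin 3}
    (hjk : j₀ ≠ k₀) (hik : i₀ ≠ k₀) (hl : l i₀ ≠ l j₀) (hm : m i₀ ≠ m j₀)
    {b : K} (hb : m i₀ - m j₀ = b * (l i₀ - l j₀))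
    (h : (m i₀ - m k₀) / (m i₀ - m j₀) = (l i₀ - l k₀) / (l i₀ - l j₀)) (i : Fin 3) :
    m i = b * l i + (m i₀ - b * l i₀) := by
  rw [div_eq_div_iff (sub_ne_zero.2 hm) (sub_ne_zero.2 hl), hb] at h
  have hk : m i₀ - m k₀ = b * (l i₀ - l k₀) :=
    mul_right_cancel₀ (sub_ne_zero.2 hl) (by linear_combination h)
  rcases Fin.eq_or_eq_or_eq_of_ne (fun h => hl (congrArg l h)) hjk hik i with rfl | rfl | rfl
  · ring
  · linear_combination -hb
  · linear_combination -hk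

lemma eq_mul_of_div_sub_eq_div_sub {dm dl mi mj li lj b : K} (hm : mj ≠ mi) (hl : lj ≠ li)
    (hb : mj - mi = b * (lj - li)) (h : dm / (mj - mi) = dl / (lj - li)) : dm = b * dl := by
  rw [div_eq_div_iff (sub_ne_zero.2 hm) (sub_ne_zero.2 hl), hb] at h
  exact mul_right_cancel₀ (sub_ne_zero.2 hl) (by linear_combination h)

end Field

section Frame

variable {E : Type*} [NormedAddCommGroup E] [NormedSpace ℝ E] {B A l : E → ℝ} {p : E}

lemma fderiv_mul_add_apply (hB : DifferentiableAt ℝ B p) (hA : DifferentiableAt ℝ A p)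
    (hl : DifferentiableAt ℝ l p) (v : E) :
    fderiv ℝ (fun q => B q * l q + A q) p v
      = B p * fderiv ℝ l p v + l p * fderiv ℝ B p v + fderiv ℝ A p v := by
  rw [fderiv_fun_add (hB.fun_mul hl) hA, fderiv_fun_mul hB hl]
  simp only [add_apply, smul_apply, smul_eq_mul]

lemma fderiv_eq_zero_of_eventuallyEq_mul_add [FiniteDimensional ℝ E]
    {ι : Type*} [Fintype ι] (hι : 3 ≤ Fintype.card ι)
    {v : ι → E} (hv : LinearIndependent ℝ v) (hcard : Fintype.card ι = Module.finrank ℝ E)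
    {l m : ι → E → ℝ} (hB : DifferentiableAt ℝ B p) (hA : DifferentiableAt ℝ A p)
    (hl : ∀ i, DifferentiableAt ℝ (l i) p) (hlne : Pairwise fun i j => l i p ≠ l j p)
    (hm : ∀ i, m i =ᶠ[𝓝 p] fun q => B q * l i q + A q)
    (hL : ∀ i j, i ≠ j → fderiv ℝ (m i) p (v j) = B p * fderiv ℝ (l i) p (v j)) :
    fderiv ℝ B p = 0 ∧ fderiv ℝ A p = 0 := by
  have hframe : ∀ j, fderiv ℝ B p (v j) = 0 ∧ fderiv ℝ A p (v j) = 0 := by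
    intro j
    have hcoeff : ∀ i, i ≠ j → l i p * fderiv ℝ B p (v j) + fderiv ℝ A p (v j) = 0 := by
      intro i hi
      have h := fderiv_mul_add_apply hB hA (hl i) (v j)
      rw [← (hm i).fderiv_eq, hL i j hi] at h
      linarith
    obtain ⟨i₁, i₂, h₁, h₂, h₁₂⟩ := exists_ne_ne_of_three_le_card hι j
    have hB0 : fderiv ℝ B p (v j) = 0 :=
      (mul_eq_zero.1 (by linear_combination hcoeff i₁ h₁ - hcoeff i₂ h₂)).resolve_left
        (sub_ne_zero.2 (hlne h₁₂))
    exact ⟨hB0, by simpa [hB0] using hcoeff i₁ h₁⟩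
  have hspan := hv.span_eq_top_of_card_eq_finrank' hcard
  exact ⟨ContinuousLinearMap.coe_injective <|
      LinearMap.ext_on_range hspan fun j => by simpa using (hframe j).1,
    ContinuousLinearMap.coe_injective <|
      LinearMap.ext_on_range hspan fun j => by simpa using (hframe j).2⟩

end Frame

theorem stmt5_general (Ω : Set (Fin 3 → ℝ)) (hΩ : IsOpen Ω) (hconn : IsConnected Ω)
    (ξ : Fin 3 → (Fin 3 → ℝ) → (Fin 3 → ℝ))
    (hind : ∀ p ∈ Ω, LinearIndependent ℝ (fun i => ξ i p))
    (c : Fin 3 → Fin 3 → Fin 3 → (Fin 3 → ℝ) → ℝ)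
    (lam mu : Fin 3 → (Fin 3 → ℝ) → ℝ)
    (hlam : ∀ i, ContDiffOn ℝ (⊤ : ℕ∞) (lam i) Ω)
    (hmu : ∀ i, ContDiffOn ℝ (⊤ : ℕ∞) (mu i) Ω)
    (hlamdist : ∀ i j, i ≠ j → ∀ p ∈ Ω, lam i p ≠ lam j p)
    (hmudist : ∀ i j, i ≠ j → ∀ p ∈ Ω, mu i p ≠ mu j p)
    (hcomm1 : ∀ i j, i ≠ j → ∀ p ∈ Ω,
      Lder ξ j (mu i) p / (mu j p - mu i p) = Lder ξ j (lam i) p / (lam j p - lam i p))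
    (hcomm2 : ∀ i j k, i ≠ j → j ≠ k → i ≠ k → ∀ p ∈ Ω,
      c i j k p * ((mu i p - mu k p) / (mu i p - mu j p)
        - (lam i p - lam k p) / (lam i p - lam j p)) = 0)
    (i₀ j₀ k₀ : Fin 3) (hij : i₀ ≠ j₀) (hjk : j₀ ≠ k₀) (hik : i₀ ≠ k₀)
    (hc0 : ∀ p ∈ Ω, c i₀ j₀ k₀ p ≠ 0) :
    ∃ a b : ℝ, ∀ i, ∀ p ∈ Ω, mu i p = b * lam i p - a := by
  obtain ⟨p₀, hp₀⟩ := hconn.nonempty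
  have hdlam i : DifferentiableOn ℝ (lam i) Ω := (hlam i).differentiableOn (by simp)
  have hdmu i : DifferentiableOn ℝ (mu i) Ω := (hmu i).differentiableOn (by simp)
  set B := fun p => (mu i₀ p - mu j₀ p) / (lam i₀ p - lam j₀ p)
  set A := fun p => mu i₀ p - B p * lam i₀ p
  have hdB : DifferentiableOn ℝ B Ω := by
    simpa only [B, div_eq_mul_inv, Pi.inv_apply] using ((hdmu i₀).fun_sub (hdmu j₀)).fun_mul
      (((hdlam i₀).fun_sub (hdlam j₀)).inv fun p hp => sub_ne_zero.2 (hlamdist _ _ hij p hp))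
  have hdA : DifferentiableOn ℝ A Ω := (hdmu i₀).sub (hdB.mul (hdlam i₀))
  have haff p (hp : p ∈ Ω) i : mu i p = B p * lam i p + A p :=
    eq_mul_add_of_div_eq_div (l := fun i => lam i p) (m := fun i => mu i p) hjk hik
      (hlamdist _ _ hij p hp) (hmudist _ _ hij p hp)
      (div_mul_cancel₀ _ (sub_ne_zero.2 (hlamdist _ _ hij p hp))).symm
      (sub_eq_zero.1 ((mul_eq_zero.1 (hcomm2 _ _ _ hij hjk hik p hp)).resolve_left (hc0 p hp))) i
  have hdir p (hp : p ∈ Ω) i j (hne : i ≠ j) :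
      fderiv ℝ (mu i) p (ξ j p) = B p * fderiv ℝ (lam i) p (ξ j p) :=
    eq_mul_of_div_sub_eq_div_sub (hmudist j i hne.symm p hp) (hlamdist j i hne.symm p hp)
      (by linear_combination haff p hp j - haff p hp i) (hcomm1 i j hne p hp)
  have hd0 p (hp : p ∈ Ω) : fderiv ℝ B p = 0 ∧ fderiv ℝ A p = 0 :=
    fderiv_eq_zero_of_eventuallyEq_mul_add (by simp) (hind p hp) (by simp)
      (hdB.differentiableAt (hΩ.mem_nhds hp)) (hdA.differentiableAt (hΩ.mem_nhds hp))
      (fun i => (hdlam i).differentiableAt (hΩ.mem_nhds hp)) (fun i j h => hlamdist i j h p hp)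
      (fun i => by filter_upwards [hΩ.mem_nhds hp] with q hq using haff q hq i) (hdir p hp)
  refine ⟨-A p₀, B p₀, fun i p hp => ?_⟩
  rw [haff p hp i,
    hΩ.is_const_of_fderiv_eq_zero hconn.isPreconnected hdB (fun q hq => (hd0 q hq).1) hp hp₀,
    hΩ.is_const_of_fderiv_eq_zero hconn.isPreconnected hdA (fun q hq => (hd0 q hq).2) hp hp₀]
  ring

/-- for `n = 3`, if the commuting-flow equations (i), (ii) hold and some
coefficient `c^{k₀}_{i₀j₀}` (with pairwise distinct indices) is everywhere nonzero on a
connected `Ω`, then `μ^i = b·λ^i − a` for constants `a, b` (the commuting flow is trivial). -/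
theorem stmt5 (Ω : Set (Fin 3 → ℝ)) (hΩ : IsOpen Ω) (hconn : IsConnected Ω)
    (ξ : Fin 3 → (Fin 3 → ℝ) → (Fin 3 → ℝ))
    (hξ : ∀ i, ContDiffOn ℝ (⊤ : ℕ∞) (ξ i) Ω)
    (hind : ∀ p ∈ Ω, LinearIndependent ℝ (fun i => ξ i p))
    (c : Fin 3 → Fin 3 → Fin 3 → (Fin 3 → ℝ) → ℝ)
    (hc : ∀ i j, ∀ p ∈ Ω,
      fderiv ℝ (ξ j) p (ξ i p) - fderiv ℝ (ξ i) p (ξ j p) = ∑ k, c i j k p • ξ k p)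
    (lam mu : Fin 3 → (Fin 3 → ℝ) → ℝ)
    (hlam : ∀ i, ContDiffOn ℝ (⊤ : ℕ∞) (lam i) Ω)
    (hmu : ∀ i, ContDiffOn ℝ (⊤ : ℕ∞) (mu i) Ω)
    (hlamdist : ∀ i j, i ≠ j → ∀ p ∈ Ω, lam i p ≠ lam j p)
    (hmudist : ∀ i j, i ≠ j → ∀ p ∈ Ω, mu i p ≠ mu j p)
    (hcomm1 : ∀ i j, i ≠ j → ∀ p ∈ Ω,
      Lder ξ j (mu i) p / (mu j p - mu i p) = Lder ξ j (lam i) p / (lam j p - lam i p))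
    (hcomm2 : ∀ i j k, i ≠ j → j ≠ k → i ≠ k → ∀ p ∈ Ω,
      c i j k p * ((mu i p - mu k p) / (mu i p - mu j p)
        - (lam i p - lam k p) / (lam i p - lam j p)) = 0)
    (i₀ j₀ k₀ : Fin 3) (hij : i₀ ≠ j₀) (hjk : j₀ ≠ k₀) (hik : i₀ ≠ k₀)
    (hc0 : ∀ p ∈ Ω, c i₀ j₀ k₀ p ≠ 0) :
    ∃ a b : ℝ, ∀ i, ∀ p ∈ Ω, mu i p = b * lam i p - a :=
  stmt5_general Ω hΩ hconn ξ hind c lam mu hlam hmu hlamdist hmudist hcomm1 hcomm2 i₀ j₀ k₀ hij hjk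
    hik hc0
end

section
/- Let u^1,…,u^n be smooth functions on Ω such that the Jacobian matrix (∂_j u^s) is invertible at every point, and suppose each u^s satisfies ∂_i ∂_j u^s = a_{ij} ∂_i u^s + a_{ji} ∂_j u^s for all i ≠ j, where a_{ij} (i ≠ j) are smooth functions on Ω. Then the a_{ij} satisfy the semihamiltonian conditions ∂_k a_{ij} = a_{ik} a_{kj} + a_{ij} a_{jk} − a_{ij} a_{ik} for all pairwise distinct i, j, k. -/
/-!
Differentiate the equation for `∂_i∂_j u` in direction `k` and the equation for `∂_k∂_j u`
in direction `i`. The two results agree by symmetry of third derivatives, and after substituting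
the second-order equations again this gives, for every solution `u`, a linear relation
`c_i ∂_i u + c_j ∂_j u + c_k ∂_k u = 0` whose coefficients depend only on the `a`'s. Applied to
`n` solutions with invertible Jacobian it forces `c_i = 0`, which is the semihamiltonian
condition.
-/

/-- Partial derivative with respect to the `i`-th coordinate. -/
noncomputable def pd {n : ℕ} {F : Type*} [NormedAddCommGroup F] [NormedSpace ℝ F]
    (i : Fin n) (w : (Fin n → ℝ) → F) : (Fin n → ℝ) → F :=
  fun p => fderiv ℝ w p (Pi.single i 1)

open Filter Topology

section PartialDerivatives

variable {n : ℕ}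

lemma pd_congr_of_eventuallyEq {f g : (Fin n → ℝ) → ℝ} {p : Fin n → ℝ}
    (h : f =ᶠ[𝓝 p] g) (k : Fin n) : pd k f p = pd k g p := by
  rw [pd, pd, h.fderiv_eq]

lemma pd_add {f g : (Fin n → ℝ) → ℝ} {p : Fin n → ℝ}
    (hf : DifferentiableAt ℝ f p) (hg : DifferentiableAt ℝ g p) (k : Fin n) :
    pd k (fun q => f q + g q) p = pd k f p + pd k g p := by
  simp [pd, fderiv_fun_add hf hg]

lemma pd_mul {f g : (Fin n → ℝ) → ℝ} {p : Fin n → ℝ}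
    (hf : DifferentiableAt ℝ f p) (hg : DifferentiableAt ℝ g p) (k : Fin n) :
    pd k (fun q => f q * g q) p = pd k f p * g p + f p * pd k g p := by
  simp only [pd, fderiv_fun_mul hf hg, add_apply, smul_apply, smul_eq_mul]
  ring

lemma pd_eq_of_eventuallyEq_mul_add_mul {f b c g h : (Fin n → ℝ) → ℝ} {p : Fin n → ℝ}
    (hf : f =ᶠ[𝓝 p] fun q => b q * g q + c q * h q)
    (hb : DifferentiableAt ℝ b p) (hc : DifferentiableAt ℝ c p)
    (hg : DifferentiableAt ℝ g p) (hh : DifferentiableAt ℝ h p) (k : Fin n) :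
    pd k f p = pd k b p * g p + b p * pd k g p + (pd k c p * h p + c p * pd k h p) := by
  rw [pd_congr_of_eventuallyEq hf k,
    pd_add (f := fun q => b q * g q) (g := fun q => c q * h q) (hb.mul hg) (hc.mul hh),
    pd_mul hb hg, pd_mul hc hh]

lemma contDiffOn_pd {Ω : Set (Fin n → ℝ)} (hΩ : IsOpen Ω) {f : (Fin n → ℝ) → ℝ}
    (hf : ContDiffOn ℝ (⊤ : ℕ∞) f Ω) (i : Fin n) : ContDiffOn ℝ (⊤ : ℕ∞) (pd i f) Ω :=
  (hf.fderiv_of_isOpen hΩ (by simp)).clm_apply contDiffOn_const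

lemma pd_pd_comm_of_contDiffOn {Ω : Set (Fin n → ℝ)} (hΩ : IsOpen Ω) {f : (Fin n → ℝ) → ℝ}
    (hf : ContDiffOn ℝ (⊤ : ℕ∞) f Ω) (i j : Fin n) {p : Fin n → ℝ} (hp : p ∈ Ω) :
    pd i (pd j f) p = pd j (pd i f) p := by
  have hfp : ContDiffAt ℝ (⊤ : ℕ∞) f p := hf.contDiffAt (hΩ.mem_nhds hp)
  have hsymm : IsSymmSndFDerivAt ℝ f p := hfp.isSymmSndFDerivAt <| by
    rw [minSmoothness_of_isRCLikeNormedField]; exact ENat.natCast_le_of_coe_top_le_withTop le_rfl 2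
  have hdiff : DifferentiableAt ℝ (fderiv ℝ f) p :=
    (hfp.fderiv_right (m := (⊤ : ℕ∞)) (by simp)).differentiableAt (by simp)
  have hsnd : ∀ v w : Fin n → ℝ,
      fderiv ℝ (fun q => fderiv ℝ f q w) p v = fderiv ℝ (fderiv ℝ f) p v w := fun v w => by
    simp [fderiv_clm_apply hdiff (differentiableAt_const w)]
  unfold pd
  rw [hsnd, hsnd, hsymm]

end PartialDerivatives

lemma Matrix.coeff_eq_zero_of_det_ne_zero {m R : Type*} [Fintype m] [DecidableEq m]
    [CommRing R] [IsDomain R] {M : Matrix m m R} (hM : M.det ≠ 0) {i j k : m}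
    (hij : i ≠ j) (hik : i ≠ k) {x y z : R} (h : ∀ s, x * M s i + y * M s j + z * M s k = 0) :
    x = 0 := by
  have hv := Matrix.eq_zero_of_mulVec_eq_zero hM (v := Pi.single i x + Pi.single j y + Pi.single k z)
    (funext fun s => by simp [Matrix.mulVec_add, Matrix.mulVec_single, h s])
  simpa [Pi.single_eq_of_ne hij, Pi.single_eq_of_ne hik] using congrFun hv i

lemma semihamiltonian_combination_eq_zero {n : ℕ} {Ω : Set (Fin n → ℝ)} (hΩ : IsOpen Ω)
    {u : (Fin n → ℝ) → ℝ} (hu : ContDiffOn ℝ (⊤ : ℕ∞) u Ω)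
    {a : Fin n → Fin n → (Fin n → ℝ) → ℝ}
    (heq : ∀ i j, i ≠ j → ∀ p ∈ Ω, pd i (pd j u) p = a i j p * pd i u p + a j i p * pd j u p)
    {i j k : Fin n} (hij : i ≠ j) (hjk : j ≠ k) (hik : i ≠ k) {p : Fin n → ℝ} (hp : p ∈ Ω)
    (ha : ∀ i j, i ≠ j → DifferentiableAt ℝ (a i j) p) :
    (pd k (a i j) p + a i j p * a i k p - a k j p * a i k p - a j k p * a i j p) * pd i u p
      + (pd k (a j i) p + a j i p * a j k p - pd i (a j k) p - a j k p * a j i p) * pd j u p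
      + (a i j p * a k i p + a j i p * a k j p - pd i (a k j) p - a k j p * a k i p) * pd k u p
      = 0 := by
  have hdu : ∀ m, DifferentiableAt ℝ (pd m u) p := fun m =>
    ((contDiffOn_pd hΩ hu m).contDiffAt (hΩ.mem_nhds hp)).differentiableAt (by simp)
  have heq_near : ∀ i j, i ≠ j →
      pd i (pd j u) =ᶠ[𝓝 p] fun q => a i j q * pd i u q + a j i q * pd j u q := fun i j h => by
    filter_upwards [hΩ.mem_nhds hp] with q hq using heq i j h q hq
  have hkij := pd_eq_of_eventuallyEq_mul_add_mul (heq_near i j hij)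
    (ha i j hij) (ha j i hij.symm) (hdu i) (hdu j) k
  have hikj := pd_eq_of_eventuallyEq_mul_add_mul (heq_near k j hjk.symm)
    (ha k j hjk.symm) (ha j k hjk) (hdu k) (hdu j) i
  have hcomm := pd_pd_comm_of_contDiffOn hΩ (contDiffOn_pd hΩ hu j) k i hp
  rw [hkij, hikj, heq k i hik.symm p hp, heq k j hjk.symm p hp, heq i k hik p hp,
    heq i j hij p hp] at hcomm
  linear_combination hcomm

/-- if the system `∂_i∂_j u = a_{ij} ∂_i u + a_{ji} ∂_j u` possesses `n`
solutions `u^1,…,u^n` with everywhere invertible Jacobian, then the coefficients satisfy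
the semihamiltonian conditions. -/
theorem stmt6 {n : ℕ} (Ω : Set (Fin n → ℝ)) (hΩ : IsOpen Ω)
    (u : Fin n → (Fin n → ℝ) → ℝ)
    (hu : ∀ s, ContDiffOn ℝ (⊤ : ℕ∞) (u s) Ω)
    (a : Fin n → Fin n → (Fin n → ℝ) → ℝ)
    (ha : ∀ i j, i ≠ j → ContDiffOn ℝ (⊤ : ℕ∞) (a i j) Ω)
    (hjac : ∀ p ∈ Ω, (Matrix.of fun s j => pd j (u s) p).det ≠ 0)
    (heq : ∀ s, ∀ i j, i ≠ j → ∀ p ∈ Ω,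
      pd i (pd j (u s)) p = a i j p * pd i (u s) p + a j i p * pd j (u s) p) :
    ∀ i j k, i ≠ j → j ≠ k → i ≠ k → ∀ p ∈ Ω,
      pd k (a i j) p
        = a i k p * a k j p + a i j p * a j k p - a i j p * a i k p := by
  intro i j k hij hjk hik p hp
  have ha_diff : ∀ i j, i ≠ j → DifferentiableAt ℝ (a i j) p := fun i j h =>
    ((ha i j h).contDiffAt (hΩ.mem_nhds hp)).differentiableAt (by simp)
  have hcoeff := Matrix.coeff_eq_zero_of_det_ne_zero (hjac p hp) hij hik fun s =>
    semihamiltonian_combination_eq_zero hΩ (hu s) (heq s) hij hjk hik hp ha_diff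
  linear_combination hcoeff
end

section
/- Let n = 2 and Ω ⊆ ℝ² open. Let λ^1, λ^2, μ^1, μ^2 be smooth on Ω with λ^1 ≠ λ^2 and μ^1 ≠ μ^2 pointwise, satisfying ∂_2 μ^1/(μ^2 − μ^1) = ∂_2 λ^1/(λ^2 − λ^1) and ∂_1 μ^2/(μ^1 − μ^2) = ∂_1 λ^2/(λ^1 − λ^2). Let u^1, u^2, f^1, f^2, q^1, q^2 be smooth with ∂_i f^k = λ^i ∂_i u^k and ∂_i q^k = μ^i ∂_i u^k for i, k ∈ {1,2}. Define r : Ω → ℝ³ by r⁰ = (λ^2 μ^1 − λ^1 μ^2)/(μ^1 − μ^2), r^k = r⁰·u^k + ((λ^1 − λ^2)/(μ^1 − μ^2))·q^k − f^k for k = 1, 2. If ∂_1 r and ∂_2 r are linearly independent at every point, then the coordinate net is conjugate on the surface r(Ω): at every point, ∂_1 ∂_2 r lies in the linear span of ∂_1 r and ∂_2 r. -/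
section PartialDerivatives

variable {n : ℕ} {G : Type*} [NormedAddCommGroup G] [NormedSpace ℝ G] {i : Fin n}
  {x : Fin n → ℝ}

theorem pd_congr {v w : (Fin n → ℝ) → G} (h : v =ᶠ[nhds x] w) : pd i v x = pd i w x := by
  simp only [pd, h.fderiv_eq]

theorem pd_add_s7 {v w : (Fin n → ℝ) → G} (hv : DifferentiableAt ℝ v x)
    (hw : DifferentiableAt ℝ w x) : pd i (fun y => v y + w y) x = pd i v x + pd i w x := by
  simp [pd, fderiv_fun_add hv hw]

theorem pd_sub {v w : (Fin n → ℝ) → G} (hv : DifferentiableAt ℝ v x)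
    (hw : DifferentiableAt ℝ w x) : pd i (fun y => v y - w y) x = pd i v x - pd i w x := by
  simp [pd, fderiv_fun_sub hv hw]

theorem pd_smul {a : (Fin n → ℝ) → ℝ} {v : (Fin n → ℝ) → G} (ha : DifferentiableAt ℝ a x)
    (hv : DifferentiableAt ℝ v x) :
    pd i (fun y => a y • v y) x = a x • pd i v x + pd i a x • v x := by
  simp [pd, fderiv_fun_smul ha hv]

theorem pd_apply {m : ℕ} {v : (Fin n → ℝ) → Fin m → ℝ} (hv : DifferentiableAt ℝ v x)
    (j : Fin m) : pd i v x j = pd i (fun y => v y j) x := by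
  simp [pd, fderiv_apply hv]

theorem differentiableAt_pd {v : (Fin n → ℝ) → G} (hv : ContDiffAt ℝ 2 v x) :
    DifferentiableAt ℝ (pd i v) x :=
  ((hv.fderiv_right one_add_one_eq_two.le).differentiableAt one_ne_zero).clm_apply
    (differentiableAt_const _)

theorem differentiableAt_vec3 (c : ℝ) {g h : (Fin n → ℝ) → ℝ} (hg : DifferentiableAt ℝ g x)
    (hh : DifferentiableAt ℝ h x) : DifferentiableAt ℝ (fun y => ![c, g y, h y]) x := by
  refine differentiableAt_pi.2 fun j => ?_
  fin_cases j
  exacts [differentiableAt_const c, hg, hh]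

theorem pd_vec3_eq_smul (c c' m : ℝ) {g h g' h' : (Fin n → ℝ) → ℝ}
    (hg : DifferentiableAt ℝ g x) (hh : DifferentiableAt ℝ h x)
    (hg' : DifferentiableAt ℝ g' x) (hh' : DifferentiableAt ℝ h' x)
    (hpg : pd i g x = m * pd i g' x) (hph : pd i h x = m * pd i h' x) :
    pd i (fun y => ![c, g y, h y]) x = m • pd i (fun y => ![c', g' y, h' y]) x := by
  ext j
  rw [Pi.smul_apply, pd_apply (differentiableAt_vec3 c hg hh),
    pd_apply (differentiableAt_vec3 c' hg' hh')]
  fin_cases j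
  · simp [pd]
  · simpa using hpg
  · simpa using hph

end PartialDerivatives

theorem Submodule.mem_span_pair_of_linearIndependent {K M : Type*} [DivisionRing K]
    [AddCommGroup M] [Module K M] {x y v w z : M} (hxy : LinearIndependent K ![x, y])
    (hx : x ∈ span K {v, w}) (hy : y ∈ span K {v, w}) (hz : z ∈ span K {v, w}) :
    z ∈ span K {x, y} := by
  have hle : span K {x, y} ≤ span K {v, w} := span_le.2 (Set.insert_subset hx (by simpa))
  have hvw : Module.finrank K (span K {v, w}) ≤ 2 := by
    have := finrank_range_le_card (R := K) ![v, w]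
    rwa [Matrix.range_cons_cons_empty, Fintype.card_fin] at this
  have hxy : Module.finrank K (span K {x, y}) = 2 := by
    rw [← Matrix.range_cons_cons_empty x y ![], finrank_span_eq_card hxy, Fintype.card_fin]
  have : FiniteDimensional K (span K {v, w}) := FiniteDimensional.span_of_finite K (Set.toFinite _)
  rwa [eq_of_le_of_finrank_le hle (hxy ▸ hvw)]

section Envelope

variable {n : ℕ} {G : Type*} [NormedAddCommGroup G] [NormedSpace ℝ G] {i : Fin n}
  {x : Fin n → ℝ} {a b : (Fin n → ℝ) → ℝ} {V W : (Fin n → ℝ) → G}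

theorem pd_smul_add_smul (ha : DifferentiableAt ℝ a x) (hb : DifferentiableAt ℝ b x)
    (hV : DifferentiableAt ℝ V x) (hW : DifferentiableAt ℝ W x) {m : ℝ}
    (hWV : pd i W x = m • pd i V x) :
    pd i (fun y => a y • V y + b y • W y) x
      = pd i a x • V x + pd i b x • W x + (a x + b x * m) • pd i V x := by
  rw [pd_add_s7 (v := fun y => a y • V y) (w := fun y => b y • W y) (ha.smul hV) (hb.smul hW),
    pd_smul ha hV, pd_smul hb hW, hWV]
  module

theorem pd_smul_add_smul_sub {F : (Fin n → ℝ) → G} (ha : DifferentiableAt ℝ a x)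
    (hb : DifferentiableAt ℝ b x) (hV : DifferentiableAt ℝ V x) (hW : DifferentiableAt ℝ W x)
    (hF : DifferentiableAt ℝ F x) {m l : ℝ} (hWV : pd i W x = m • pd i V x)
    (hFV : pd i F x = l • pd i V x) (hab : a x + b x * m = l) :
    pd i (fun y => a y • V y + b y • W y - F y) x = pd i a x • V x + pd i b x • W x := by
  rw [pd_sub (v := fun y => a y • V y + b y • W y) ((ha.smul hV).add (hb.smul hW)) hF,
    pd_smul_add_smul ha hb hV hW hWV, hFV, hab, add_sub_cancel_right]

theorem pd_add_pd_mul_eq_zero {l l' m m' : (Fin n → ℝ) → ℝ} (ha : DifferentiableAt ℝ a x)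
    (hb : DifferentiableAt ℝ b x) (hm : DifferentiableAt ℝ m x)
    (habl : ∀ᶠ y in nhds x, a y + b y * m y = l y) (hbm : b x * (m x - m' x) = l x - l' x)
    (hmm' : m x ≠ m' x) (hll' : l x ≠ l' x)
    (hcomm : pd i m x / (m' x - m x) = pd i l x / (l' x - l x)) :
    pd i a x + pd i b x * m x = 0 := by
  have hpd : pd i a x + (b x * pd i m x + pd i b x * m x) = pd i l x := by
    rw [← pd_congr habl, pd_add_s7 (w := fun y => b y * m y) ha (hb.mul hm)]
    simpa only [smul_eq_mul] using (congrArg (pd i a x + ·) (pd_smul (i := i) hb hm)).symm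
  have hcomm' : pd i l x * (m x - m' x) = pd i m x * (l x - l' x) := by
    rw [div_eq_div_iff (sub_ne_zero.2 hmm'.symm) (sub_ne_zero.2 hll'.symm)] at hcomm
    linear_combination hcomm
  refine (mul_eq_zero.1 (?_ : (pd i a x + pd i b x * m x) * (m x - m' x) = 0)).resolve_right
    (sub_ne_zero.2 hmm')
  linear_combination (m x - m' x) * hpd - pd i m x * hbm + hcomm'

theorem pd_pd_mem_span_of_envelope {Ω : Set (Fin n → ℝ)} (hΩ : IsOpen Ω) {F r : (Fin n → ℝ) → G}
    {lam mu : Fin n → (Fin n → ℝ) → ℝ} (hA : ∀ y ∈ Ω, ContDiffAt ℝ 2 a y)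
    (hB : ∀ y ∈ Ω, ContDiffAt ℝ 2 b y) (hV : ∀ y ∈ Ω, DifferentiableAt ℝ V y)
    (hW : ∀ y ∈ Ω, DifferentiableAt ℝ W y) (hF : ∀ y ∈ Ω, DifferentiableAt ℝ F y)
    (hab : ∀ k, ∀ y ∈ Ω, a y + b y * mu k y = lam k y)
    (hWV : ∀ k, ∀ y ∈ Ω, pd k W y = mu k y • pd k V y)
    (hFV : ∀ k, ∀ y ∈ Ω, pd k F y = lam k y • pd k V y)
    (hr : r = fun y => a y • V y + b y • W y - F y) {j : Fin n} (hx : x ∈ Ω)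
    (hmu : DifferentiableAt ℝ (mu j) x) (hmuij : mu j x ≠ mu i x) (hlamij : lam j x ≠ lam i x)
    (hcomm : pd i (mu j) x / (mu i x - mu j x) = pd i (lam j) x / (lam i x - lam j x))
    (hind : LinearIndependent ℝ ![pd j r x, pd i r x]) :
    pd j (pd i r) x ∈ Submodule.span ℝ {pd j r x, pd i r x} := by
  have hfirst : ∀ k, ∀ y ∈ Ω, pd k r y = pd k a y • V y + pd k b y • W y := fun k y hy => by
    rw [hr]
    exact pd_smul_add_smul_sub ((hA y hy).differentiableAt two_ne_zero)
      ((hB y hy).differentiableAt two_ne_zero) (hV y hy) (hW y hy) (hF y hy) (hWV k y hy)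
      (hFV k y hy) (hab k y hy)
  have hkey : pd i a x + pd i b x * mu j x = 0 :=
    pd_add_pd_mul_eq_zero ((hA x hx).differentiableAt two_ne_zero)
      ((hB x hx).differentiableAt two_ne_zero) hmu
      (Filter.eventually_of_mem (hΩ.mem_nhds hx) (hab j))
      (by linear_combination hab j x hx - hab i x hx) hmuij hlamij hcomm
  have hsecond : pd j (pd i r) x = pd j (pd i a) x • V x + pd j (pd i b) x • W x := by
    rw [pd_congr (Filter.eventually_of_mem (hΩ.mem_nhds hx) (hfirst i)),
      pd_smul_add_smul (differentiableAt_pd (hA x hx)) (differentiableAt_pd (hB x hx))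
        (hV x hx) (hW x hx) (hWV j x hx), hkey, zero_smul, add_zero]
  have hspan (c d : ℝ) : c • V x + d • W x ∈ Submodule.span ℝ {V x, W x} :=
    Submodule.mem_span_pair.2 ⟨c, d, rfl⟩
  exact Submodule.mem_span_pair_of_linearIndependent hind (hfirst j x hx ▸ hspan _ _)
    (hfirst i x hx ▸ hspan _ _) (hsecond ▸ hspan _ _)

end Envelope

theorem envelope_coeffs_add_mul {l₀ l₁ m₀ m₁ : ℝ} (hm : m₀ ≠ m₁) :
    (l₁ * m₀ - l₀ * m₁) / (m₀ - m₁) + (l₀ - l₁) / (m₀ - m₁) * m₀ = l₀ ∧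
      (l₁ * m₀ - l₀ * m₁) / (m₀ - m₁) + (l₀ - l₁) / (m₀ - m₁) * m₁ = l₁ := by
  have := sub_ne_zero.2 hm
  constructor <;> (field_simp; ring)

theorem stmt7_general (Ω : Set (Fin 2 → ℝ)) (hΩ : IsOpen Ω)
    (lam mu : Fin 2 → (Fin 2 → ℝ) → ℝ)
    (hlam : ∀ i, ContDiffOn ℝ (⊤ : ℕ∞) (lam i) Ω)
    (hmu : ∀ i, ContDiffOn ℝ (⊤ : ℕ∞) (mu i) Ω)
    (hlamd : ∀ p ∈ Ω, lam 0 p ≠ lam 1 p)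
    (hmud : ∀ p ∈ Ω, mu 0 p ≠ mu 1 p)
    (hcomm1 : ∀ p ∈ Ω,
      pd 1 (mu 0) p / (mu 1 p - mu 0 p) = pd 1 (lam 0) p / (lam 1 p - lam 0 p))
    (u f q : Fin 2 → (Fin 2 → ℝ) → ℝ)
    (hu : ∀ k, ContDiffOn ℝ (⊤ : ℕ∞) (u k) Ω)
    (hfsm : ∀ k, ContDiffOn ℝ (⊤ : ℕ∞) (f k) Ω)
    (hqsm : ∀ k, ContDiffOn ℝ (⊤ : ℕ∞) (q k) Ω)
    (hf : ∀ i k, ∀ p ∈ Ω, pd i (f k) p = lam i p * pd i (u k) p)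
    (hq : ∀ i k, ∀ p ∈ Ω, pd i (q k) p = mu i p * pd i (u k) p)
    (r : (Fin 2 → ℝ) → (Fin 3 → ℝ))
    (hr : r = fun p =>
      ![(lam 1 p * mu 0 p - lam 0 p * mu 1 p) / (mu 0 p - mu 1 p),
        ((lam 1 p * mu 0 p - lam 0 p * mu 1 p) / (mu 0 p - mu 1 p)) * u 0 p
          + ((lam 0 p - lam 1 p) / (mu 0 p - mu 1 p)) * q 0 p - f 0 p,
        ((lam 1 p * mu 0 p - lam 0 p * mu 1 p) / (mu 0 p - mu 1 p)) * u 1 p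
          + ((lam 0 p - lam 1 p) / (mu 0 p - mu 1 p)) * q 1 p - f 1 p])
    (hind : ∀ p ∈ Ω, LinearIndependent ℝ ![pd 0 r p, pd 1 r p]) :
    ∀ p ∈ Ω, pd 0 (pd 1 r) p ∈ Submodule.span ℝ ({pd 0 r p, pd 1 r p} : Set (Fin 3 → ℝ)) := by
  intro p hp
  have hC2 {g : (Fin 2 → ℝ) → ℝ} (hg : ContDiffOn ℝ (⊤ : ℕ∞) g Ω) {x} (hx : x ∈ Ω) :
      ContDiffAt ℝ 2 g x :=
    (hg.contDiffAt (hΩ.mem_nhds hx)).of_le (WithTop.coe_le_coe.2 le_top)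
  have hD {g : (Fin 2 → ℝ) → ℝ} (hg : ContDiffOn ℝ (⊤ : ℕ∞) g Ω) {x} (hx : x ∈ Ω) :
      DifferentiableAt ℝ g x :=
    (hC2 hg hx).differentiableAt two_ne_zero
  have hdenom : ∀ x ∈ Ω, mu 0 x - mu 1 x ≠ 0 := fun x hx => sub_ne_zero.2 (hmud x hx)
  set A := fun x => (lam 1 x * mu 0 x - lam 0 x * mu 1 x) / (mu 0 x - mu 1 x)
  set B := fun x => (lam 0 x - lam 1 x) / (mu 0 x - mu 1 x)
  have hA : ContDiffOn ℝ (⊤ : ℕ∞) A Ω :=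
    (((hlam 1).mul (hmu 0)).sub ((hlam 0).mul (hmu 1))).div ((hmu 0).sub (hmu 1)) hdenom
  have hB : ContDiffOn ℝ (⊤ : ℕ∞) B Ω := ((hlam 0).sub (hlam 1)).div ((hmu 0).sub (hmu 1)) hdenom
  have hAB : ∀ k, ∀ x ∈ Ω, A x + B x * mu k x = lam k x := fun k x hx => by
    fin_cases k
    exacts [(envelope_coeffs_add_mul (hmud x hx)).1, (envelope_coeffs_add_mul (hmud x hx)).2]
  refine pd_pd_mem_span_of_envelope hΩ (V := fun x => ![1, u 0 x, u 1 x])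
    (W := fun x => ![0, q 0 x, q 1 x]) (F := fun x => ![0, f 0 x, f 1 x])
    (fun _ => hC2 hA) (fun _ => hC2 hB)
    (fun x hx => differentiableAt_vec3 1 (hD (hu 0) hx) (hD (hu 1) hx))
    (fun x hx => differentiableAt_vec3 0 (hD (hqsm 0) hx) (hD (hqsm 1) hx))
    (fun x hx => differentiableAt_vec3 0 (hD (hfsm 0) hx) (hD (hfsm 1) hx)) hAB
    (fun k x hx => pd_vec3_eq_smul 0 1 _ (hD (hqsm 0) hx) (hD (hqsm 1) hx) (hD (hu 0) hx)
      (hD (hu 1) hx) (hq k 0 x hx) (hq k 1 x hx))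
    (fun k x hx => pd_vec3_eq_smul 0 1 _ (hD (hfsm 0) hx) (hD (hfsm 1) hx) (hD (hu 0) hx)
      (hD (hu 1) hx) (hf k 0 x hx) (hf k 1 x hx))
    ?_ hp (hD (hmu 0) hp) (hmud p hp) (hlamd p hp) (hcomm1 p hp) (hind p hp)
  rw [hr]
  funext x j
  fin_cases j <;> simp [A, B]

/-- on the surface `r` (the envelope of the planes associated with a
commuting flow, i.e. the surface harmonic to the congruence) the coordinate net
`R¹, R²` is conjugate: `∂_1∂_2 r ∈ span{∂_1 r, ∂_2 r}`.
Indices: `0, 1 : Fin 2` stand for `1, 2` of the paper. -/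
theorem stmt7 (Ω : Set (Fin 2 → ℝ)) (hΩ : IsOpen Ω)
    (lam mu : Fin 2 → (Fin 2 → ℝ) → ℝ)
    (hlam : ∀ i, ContDiffOn ℝ (⊤ : ℕ∞) (lam i) Ω)
    (hmu : ∀ i, ContDiffOn ℝ (⊤ : ℕ∞) (mu i) Ω)
    (hlamd : ∀ p ∈ Ω, lam 0 p ≠ lam 1 p)
    (hmud : ∀ p ∈ Ω, mu 0 p ≠ mu 1 p)
    (hcomm1 : ∀ p ∈ Ω,
      pd 1 (mu 0) p / (mu 1 p - mu 0 p) = pd 1 (lam 0) p / (lam 1 p - lam 0 p))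
    (hcomm2 : ∀ p ∈ Ω,
      pd 0 (mu 1) p / (mu 0 p - mu 1 p) = pd 0 (lam 1) p / (lam 0 p - lam 1 p))
    (u f q : Fin 2 → (Fin 2 → ℝ) → ℝ)
    (hu : ∀ k, ContDiffOn ℝ (⊤ : ℕ∞) (u k) Ω)
    (hfsm : ∀ k, ContDiffOn ℝ (⊤ : ℕ∞) (f k) Ω)
    (hqsm : ∀ k, ContDiffOn ℝ (⊤ : ℕ∞) (q k) Ω)
    (hf : ∀ i k, ∀ p ∈ Ω, pd i (f k) p = lam i p * pd i (u k) p)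
    (hq : ∀ i k, ∀ p ∈ Ω, pd i (q k) p = mu i p * pd i (u k) p)
    (r : (Fin 2 → ℝ) → (Fin 3 → ℝ))
    (hr : r = fun p =>
      ![(lam 1 p * mu 0 p - lam 0 p * mu 1 p) / (mu 0 p - mu 1 p),
        ((lam 1 p * mu 0 p - lam 0 p * mu 1 p) / (mu 0 p - mu 1 p)) * u 0 p
          + ((lam 0 p - lam 1 p) / (mu 0 p - mu 1 p)) * q 0 p - f 0 p,
        ((lam 1 p * mu 0 p - lam 0 p * mu 1 p) / (mu 0 p - mu 1 p)) * u 1 p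
          + ((lam 0 p - lam 1 p) / (mu 0 p - mu 1 p)) * q 1 p - f 1 p])
    (hind : ∀ p ∈ Ω, LinearIndependent ℝ ![pd 0 r p, pd 1 r p]) :
    ∀ p ∈ Ω, pd 0 (pd 1 r) p ∈ Submodule.span ℝ ({pd 0 r p, pd 1 r p} : Set (Fin 3 → ℝ)) :=
  stmt7_general Ω hΩ lam mu hlam hmu hlamd hmud hcomm1 u f q hu hfsm hqsm hf hq r hr hind
end

section
/- Fix an index α. Let h, g be smooth on Ω with ∂_i g = λ^i ∂_i h for all i, and assume h, ∂_α h, ∂_α g and ∂_α h − a_{iα} h (for every i ≠ α) are nonvanishing on Ω. Define Λ^α = g/h and Λ^i = (λ^i ∂_α h − a_{iα} g)/(∂_α h − a_{iα} h) for i ≠ α. Then for every pair of smooth functions u, f on Ω with ∂_i f = λ^i ∂_i u for all i, the Lévy transforms U = u − (h/∂_α h)·∂_α u and F = f − (g/∂_α g)·∂_α f satisfy ∂_i F = Λ^i ∂_i U for all i = 1,…,n. -/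
/-!
Because `∂_α g = λ^α ∂_α h` and `∂_α f = λ^α ∂_α u`, near each point the transformed flux is
`F = f − (g / ∂_α h) ∂_α u`. Cross-differentiating a conservation law `(u, f)` eliminates `f` and
gives `∂_i ∂_α u = a_{iα} ∂_i u + a_{αi} ∂_α u` for `i ≠ α`, and likewise for `(h, g)`.
Substituting these, `∂_i U` and `∂_i F` become the multiples `(∂_α h − a_{iα} h) / ∂_α h` and
`(λ^i ∂_α h − a_{iα} g) / ∂_α h` of the same quantity `∂_i u − (∂_i h / ∂_α h) ∂_α u`, whose ratio
is `Λ^i`. For `i = α` no mixed derivative appears and `∂_α F = (g / h) ∂_α U` directly.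
-/

open Filter Topology

variable {n : ℕ}

/-- The paper's `a_{ij}`, i.e. the Christoffel symbol `Γ^i_{ij}` of the diagonal system. -/
noncomputable def christoffel (lam : Fin n → (Fin n → ℝ) → ℝ) (i j : Fin n)
    (p : Fin n → ℝ) : ℝ :=
  pd j (lam i) p / (lam j p - lam i p)

noncomputable def levyTransform (h : (Fin n → ℝ) → ℝ) (α : Fin n)
    (u : (Fin n → ℝ) → ℝ) : (Fin n → ℝ) → ℝ :=
  fun x => u x - h x / pd α h x * pd α u x

section Calculus

variable {a b c d w : (Fin n → ℝ) → ℝ} {p : Fin n → ℝ}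

lemma pd_congr_s9 (i : Fin n) (hab : a =ᶠ[𝓝 p] b) : pd i a p = pd i b p := by
  simp only [pd, hab.fderiv_eq]

lemma pd_mul_s9 (i : Fin n) (ha : DifferentiableAt ℝ a p) (hb : DifferentiableAt ℝ b p) :
    pd i (fun x => a x * b x) p = pd i a p * b p + a p * pd i b p := by
  simp only [pd, fderiv_fun_mul ha hb, add_apply, smul_apply, smul_eq_mul]
  ring

lemma pd_sub_div_mul (i : Fin n) (ha : DifferentiableAt ℝ a p) (hb : DifferentiableAt ℝ b p)
    (hc : DifferentiableAt ℝ c p) (hd : DifferentiableAt ℝ d p) (hc0 : c p ≠ 0) :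
    pd i (fun x => a x - b x / c x * d x) p
      = pd i a p - ((pd i b p * c p - b p * pd i c p) / c p ^ 2 * d p
          + b p / c p * pd i d p) := by
  simp only [div_eq_mul_inv]
  have hinv : fderiv ℝ (fun x => (c x)⁻¹) p = (fderiv ℝ (·⁻¹) (c p)).comp (fderiv ℝ c p) :=
    fderiv_comp (g := (·⁻¹)) p (differentiableAt_inv hc0) hc
  have hc' := hc.fun_inv hc0
  simp only [pd, fderiv_fun_sub ha ((hb.fun_mul hc').fun_mul hd),
    fderiv_fun_mul (hb.fun_mul hc') hd, fderiv_fun_mul hb hc', hinv, fderiv_inv, sub_apply,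
    add_apply, smul_apply, smul_eq_mul, ContinuousLinearMap.comp_apply,
    ContinuousLinearMap.toSpanSingleton_apply]
  field_simp
  ring

lemma ContDiffAt.differentiableAt_fderiv (hw : ContDiffAt ℝ 2 w p) :
    DifferentiableAt ℝ (fderiv ℝ w) p :=
  (hw.fderiv_right (m := 1) le_rfl).differentiableAt one_ne_zero

lemma ContDiffAt.differentiableAt_pd (hw : ContDiffAt ℝ 2 w p) (i : Fin n) :
    DifferentiableAt ℝ (pd i w) p :=
  hw.differentiableAt_fderiv.clm_apply (differentiableAt_const _)

lemma pd_pd_comm (hw : ContDiffAt ℝ 2 w p) (i j : Fin n) :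
    pd i (pd j w) p = pd j (pd i w) p := by
  have hev : ∀ k l : Fin n,
      pd k (pd l w) p = fderiv ℝ (fderiv ℝ w) p (Pi.single k 1) (Pi.single l 1) := by
    intro k l
    change fderiv ℝ (fun q => fderiv ℝ w q (Pi.single l 1)) p (Pi.single k 1) = _
    rw [fderiv_clm_apply hw.differentiableAt_fderiv (differentiableAt_const _)]
    simp
  rw [hev, hev]
  exact hw.isSymmSndFDerivAt (by simp [minSmoothness_of_isRCLikeNormedField]) _ _

end Calculus

section ConservationLaw

variable {lam : Fin n → (Fin n → ℝ) → ℝ} {u f : (Fin n → ℝ) → ℝ} {p : Fin n → ℝ}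

lemma pd_pd_of_conservationLaw {i j : Fin n} (hij : lam i p ≠ lam j p)
    (hli : DifferentiableAt ℝ (lam i) p) (hlj : DifferentiableAt ℝ (lam j) p)
    (hu : ContDiffAt ℝ 2 u p) (hf : ContDiffAt ℝ 2 f p)
    (hcl : ∀ᶠ q in 𝓝 p, ∀ k, pd k f q = lam k q * pd k u q) :
    pd j (pd i u) p = christoffel lam i j p * pd i u p + christoffel lam j i p * pd j u p := by
  have hdiff : ∀ k l, DifferentiableAt ℝ (lam k) p →
      pd l (pd k f) p = pd l (lam k) p * pd k u p + lam k p * pd l (pd k u) p :=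
    fun k l hlk => by
      rw [pd_congr_s9 l (hcl.mono fun q hq => hq k), pd_mul_s9 l hlk (hu.differentiableAt_pd k)]
  have hcross : pd i (lam j) p * pd j u p + lam j p * pd i (pd j u) p
      = pd j (lam i) p * pd i u p + lam i p * pd j (pd i u) p := by
    rw [← hdiff j i hlj, ← hdiff i j hli, pd_pd_comm hf]
  rw [pd_pd_comm hu i j] at hcross
  have hji : lam j p - lam i p ≠ 0 := sub_ne_zero.mpr hij.symm
  have hij' : lam i p - lam j p ≠ 0 := sub_ne_zero.mpr hij
  unfold christoffel
  field_simp
  linear_combination (lam i p - lam j p) * hcross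

end ConservationLaw

section Levy

variable {lam : Fin n → (Fin n → ℝ) → ℝ} {h g u f : (Fin n → ℝ) → ℝ} {p : Fin n → ℝ}
  {α : Fin n}

lemma levyTransform_flux_eventuallyEq
    (hhg : ∀ᶠ q in 𝓝 p, ∀ k, pd k g q = lam k q * pd k h q)
    (huf : ∀ᶠ q in 𝓝 p, ∀ k, pd k f q = lam k q * pd k u q)
    (hg0 : ∀ᶠ q in 𝓝 p, pd α g q ≠ 0) :
    levyTransform g α f =ᶠ[𝓝 p] fun x => f x - g x / pd α h x * pd α u x := by
  filter_upwards [hhg, huf, hg0] with q hg hf hq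
  rw [hg α] at hq
  have hl : lam α q ≠ 0 := left_ne_zero_of_mul hq
  have hh : pd α h q ≠ 0 := right_ne_zero_of_mul hq
  simp only [levyTransform, hg α, hf α]
  field_simp

lemma pd_levyTransform (i : Fin n) (hh : ContDiffAt ℝ 2 h p) (hu : ContDiffAt ℝ 2 u p)
    (hh0 : pd α h p ≠ 0) :
    pd i (levyTransform h α u) p = pd i u p - ((pd i h p * pd α h p - h p * pd i (pd α h) p)
      / pd α h p ^ 2 * pd α u p + h p / pd α h p * pd i (pd α u) p) :=
  pd_sub_div_mul i (hu.differentiableAt two_ne_zero) (hh.differentiableAt two_ne_zero)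
    (hh.differentiableAt_pd α) (hu.differentiableAt_pd α) hh0

lemma pd_levyTransform_flux_self (hh : ContDiffAt ℝ 2 h p) (hu : ContDiffAt ℝ 2 u p)
    (hg : DifferentiableAt ℝ g p) (hf : DifferentiableAt ℝ f p)
    (hhg : ∀ᶠ q in 𝓝 p, ∀ k, pd k g q = lam k q * pd k h q)
    (huf : ∀ᶠ q in 𝓝 p, ∀ k, pd k f q = lam k q * pd k u q)
    (hg0 : ∀ᶠ q in 𝓝 p, pd α g q ≠ 0) (hh0 : h p ≠ 0) (hhα0 : pd α h p ≠ 0) :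
    pd α (levyTransform g α f) p = g p / h p * pd α (levyTransform h α u) p := by
  rw [pd_congr_s9 α (levyTransform_flux_eventuallyEq hhg huf hg0),
    pd_sub_div_mul α hf hg (hh.differentiableAt_pd α) (hu.differentiableAt_pd α) hhα0,
    pd_levyTransform α hh hu hhα0, hhg.self_of_nhds α, huf.self_of_nhds α]
  field_simp
  ring

lemma pd_levyTransform_flux_of_ne {i : Fin n} (hiα : lam i p ≠ lam α p)
    (hli : DifferentiableAt ℝ (lam i) p) (hlα : DifferentiableAt ℝ (lam α) p)
    (hh : ContDiffAt ℝ 2 h p) (hu : ContDiffAt ℝ 2 u p)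
    (hg : ContDiffAt ℝ 2 g p) (hf : ContDiffAt ℝ 2 f p)
    (hhg : ∀ᶠ q in 𝓝 p, ∀ k, pd k g q = lam k q * pd k h q)
    (huf : ∀ᶠ q in 𝓝 p, ∀ k, pd k f q = lam k q * pd k u q)
    (hg0 : ∀ᶠ q in 𝓝 p, pd α g q ≠ 0) (hhα0 : pd α h p ≠ 0)
    (hden : pd α h p - christoffel lam i α p * h p ≠ 0) :
    pd i (levyTransform g α f) p
      = (lam i p * pd α h p - christoffel lam i α p * g p)
          / (pd α h p - christoffel lam i α p * h p) * pd i (levyTransform h α u) p := by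
  rw [pd_congr_s9 i (levyTransform_flux_eventuallyEq hhg huf hg0),
    pd_sub_div_mul i (hf.differentiableAt two_ne_zero) (hg.differentiableAt two_ne_zero)
      (hh.differentiableAt_pd α) (hu.differentiableAt_pd α) hhα0,
    pd_levyTransform i hh hu hhα0,
    pd_pd_of_conservationLaw hiα.symm hlα hli hh hg hhg,
    pd_pd_of_conservationLaw hiα.symm hlα hli hu hf huf,
    hhg.self_of_nhds i, huf.self_of_nhds i]
  field_simp
  ring

end Levy

/-- the Lévy transforms `U = u − (h/∂_α h)∂_α u`, `F = f − (g/∂_α g)∂_α f`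
of a conservation law `(u, f)` satisfy `∂_i F = Λ^i ∂_i U` where `Λ` are the
Lévy-transformed characteristic velocities (24); here `a_{iα} = ∂_α λ^i/(λ^α − λ^i)`. -/
theorem stmt9 {n : ℕ} (Ω : Set (Fin n → ℝ)) (hΩ : IsOpen Ω) (α : Fin n)
    (lam : Fin n → (Fin n → ℝ) → ℝ)
    (hlam : ∀ i, ContDiffOn ℝ (⊤ : ℕ∞) (lam i) Ω)
    (hdist : ∀ i j, i ≠ j → ∀ p ∈ Ω, lam i p ≠ lam j p)
    (h g : (Fin n → ℝ) → ℝ)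
    (hhsm : ContDiffOn ℝ (⊤ : ℕ∞) h Ω) (hgsm : ContDiffOn ℝ (⊤ : ℕ∞) g Ω)
    (hcl : ∀ i, ∀ p ∈ Ω, pd i g p = lam i p * pd i h p)
    (hh0 : ∀ p ∈ Ω, h p ≠ 0)
    (hdh0 : ∀ p ∈ Ω, pd α h p ≠ 0)
    (hdg0 : ∀ p ∈ Ω, pd α g p ≠ 0)
    (hden : ∀ i, i ≠ α → ∀ p ∈ Ω,
      pd α h p - (pd α (lam i) p / (lam α p - lam i p)) * h p ≠ 0)
    (Lam : Fin n → (Fin n → ℝ) → ℝ)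
    (hLamα : ∀ p, Lam α p = g p / h p)
    (hLami : ∀ i, i ≠ α → ∀ p, Lam i p =
      (lam i p * pd α h p - (pd α (lam i) p / (lam α p - lam i p)) * g p)
        / (pd α h p - (pd α (lam i) p / (lam α p - lam i p)) * h p)) :
    ∀ u f : (Fin n → ℝ) → ℝ,
      ContDiffOn ℝ (⊤ : ℕ∞) u Ω → ContDiffOn ℝ (⊤ : ℕ∞) f Ω →
      (∀ i, ∀ p ∈ Ω, pd i f p = lam i p * pd i u p) →
      ∀ i, ∀ p ∈ Ω,
        pd i (fun x => f x - (g x / pd α g x) * pd α f x) p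
          = Lam i p * pd i (fun x => u x - (h x / pd α h x) * pd α u x) p := by
  intro u f husm hfsm hclu i p hp
  have hΩp : Ω ∈ 𝓝 p := hΩ.mem_nhds hp
  have c2At : ∀ {w : (Fin n → ℝ) → ℝ}, ContDiffOn ℝ (⊤ : ℕ∞) w Ω → ContDiffAt ℝ 2 w p :=
    fun hw => (hw.contDiffAt hΩp).of_le (WithTop.coe_le_coe.mpr le_top)
  have diffAt : ∀ {w : (Fin n → ℝ) → ℝ}, ContDiffOn ℝ (⊤ : ℕ∞) w Ω →
      DifferentiableAt ℝ w p :=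
    fun hw => (c2At hw).differentiableAt two_ne_zero
  have lawNear : ∀ {w v : (Fin n → ℝ) → ℝ}, (∀ k, ∀ q ∈ Ω, pd k v q = lam k q * pd k w q) →
      ∀ᶠ q in 𝓝 p, ∀ k, pd k v q = lam k q * pd k w q := fun hwv =>
    eventually_of_mem hΩp fun q hq k => hwv k q hq
  have hg0 : ∀ᶠ q in 𝓝 p, pd α g q ≠ 0 := eventually_of_mem hΩp hdg0
  rcases eq_or_ne i α with rfl | hi
  · rw [hLamα]
    exact pd_levyTransform_flux_self (c2At hhsm) (c2At husm) (diffAt hgsm) (diffAt hfsm)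
      (lawNear hcl) (lawNear hclu) hg0 (hh0 p hp) (hdh0 p hp)
  · rw [hLami i hi]
    exact pd_levyTransform_flux_of_ne (hdist i α hi p hp) (diffAt (hlam i)) (diffAt (hlam α))
      (c2At hhsm) (c2At husm) (c2At hgsm) (c2At hfsm) (lawNear hcl) (lawNear hclu) hg0
      (hdh0 p hp) (hden i hi p hp)
end

section
/- Fix distinct indices α ≠ β. Let a_{ij} (i ≠ j) be smooth on Ω and let h, u be smooth solutions of ∂_i ∂_j w = a_{ij} ∂_i w + a_{ji} ∂_j w (i ≠ j, w = h and w = u). Assume h, ∂_α h, ∂_β h and 1 − a_{αβ} h/∂_β h are nonvanishing on Ω. Set u' = u − (h/∂_β h)·∂_β u (the Lévy transform L_β(u)) and A_{βα} = (1 − a_{αβ} h/∂_β h)·(∂_α h/h) (the L_β-transformed coefficient). Then the Laplace transform S_{αβ} of u' with respect to the transformed coefficients recovers the Lévy transform L_α: u' − ∂_α u'/A_{βα} = u − (h/∂_α h)·∂_α u; that is, L_α = S_{αβ} ∘ L_β. -/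
/-- `L_α = S_{αβ} ∘ L_β`: applying to the Lévy transform
`u' = u − (h/∂_β h)∂_β u` the Laplace transformation `u' ↦ u' − ∂_α u'/A_{βα}` with the
transformed coefficient `A_{βα} = (1 − a_{αβ}h/∂_β h)(∂_α h/h)` recovers the Lévy
transform `u − (h/∂_α h)∂_α u`. -/
theorem stmt13 {n : ℕ} (Ω : Set (Fin n → ℝ)) (hΩ : IsOpen Ω)
    (α β : Fin n) (hαβ : α ≠ β)
    (a : Fin n → Fin n → (Fin n → ℝ) → ℝ)
    (hasm : ∀ i j, i ≠ j → ContDiffOn ℝ (⊤ : ℕ∞) (a i j) Ω)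
    (h u : (Fin n → ℝ) → ℝ)
    (hhsm : ContDiffOn ℝ (⊤ : ℕ∞) h Ω) (husm : ContDiffOn ℝ (⊤ : ℕ∞) u Ω)
    (hheq : ∀ i j, i ≠ j → ∀ p ∈ Ω,
      pd i (pd j h) p = a i j p * pd i h p + a j i p * pd j h p)
    (hueq : ∀ i j, i ≠ j → ∀ p ∈ Ω,
      pd i (pd j u) p = a i j p * pd i u p + a j i p * pd j u p)
    (hh0 : ∀ p ∈ Ω, h p ≠ 0)
    (hdαh0 : ∀ p ∈ Ω, pd α h p ≠ 0)
    (hdβh0 : ∀ p ∈ Ω, pd β h p ≠ 0)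
    (hw0 : ∀ p ∈ Ω, 1 - a α β p * h p / pd β h p ≠ 0) :
    ∀ p ∈ Ω,
      (u p - (h p / pd β h p) * pd β u p)
        - pd α (fun x => u x - (h x / pd β h x) * pd β u x) p
            / ((1 - a α β p * h p / pd β h p) * (pd α h p / h p))
        = u p - (h p / pd α h p) * pd α u p := by
  intro p hp
  have hpΩ : Ω ∈ nhds p := hΩ.mem_nhds hp
  have hhd : DifferentiableAt ℝ h p :=
    (hhsm.contDiffAt hpΩ).differentiableAt (by simp)
  have hud : DifferentiableAt ℝ u p :=
    (husm.contDiffAt hpΩ).differentiableAt (by simp)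
  have hβhd : DifferentiableAt ℝ (pd β h) p := by
    have h1 : ContDiffAt ℝ 1 (fderiv ℝ h) p :=
      (hhsm.contDiffAt hpΩ).fderiv_right (by norm_cast)
    exact (h1.differentiableAt one_ne_zero).clm_apply (differentiableAt_const _)
  have hβud : DifferentiableAt ℝ (pd β u) p := by
    have h1 : ContDiffAt ℝ 1 (fderiv ℝ u) p :=
      (husm.contDiffAt hpΩ).fderiv_right (by norm_cast)
    exact (h1.differentiableAt one_ne_zero).clm_apply (differentiableAt_const _)
  have hB : pd β h p ≠ 0 := hdβh0 p hp
  have hH : h p ≠ 0 := hh0 p hp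
  have hA : pd α h p ≠ 0 := hdαh0 p hp
  have hW : 1 - a α β p * h p / pd β h p ≠ 0 := hw0 p hp
  have hfun : (fun x => u x - (h x / pd β h x) * pd β u x)
      = (fun x => u x - h x * (pd β h x)⁻¹ * pd β u x) := by
    funext x; rw [div_eq_mul_inv]
  have Hinv : HasFDerivAt (fun x => (pd β h x)⁻¹)
      (((ContinuousLinearMap.smulRight (1 : ℝ →L[ℝ] ℝ)
        (-(pd β h p ^ 2)⁻¹))).comp (fderiv ℝ (pd β h) p)) p :=
    (hasFDerivAt_inv hB).comp p hβhd.hasFDerivAt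
  have Hf : HasFDerivAt (fun x => u x - h x * (pd β h x)⁻¹ * pd β u x)
      (fderiv ℝ u p -
        ((h p * (pd β h p)⁻¹) • fderiv ℝ (pd β u) p +
          pd β u p • (h p • (((ContinuousLinearMap.smulRight (1 : ℝ →L[ℝ] ℝ)
              (-(pd β h p ^ 2)⁻¹))).comp (fderiv ℝ (pd β h) p)) +
            (pd β h p)⁻¹ • fderiv ℝ h p))) p :=
    hud.hasFDerivAt.sub ((hhd.hasFDerivAt.mul Hinv).mul hβud.hasFDerivAt)
  have key : pd α (fun x => u x - (h x / pd β h x) * pd β u x) p =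
      pd α u p - ((h p * (pd β h p)⁻¹) * pd α (pd β u) p +
        pd β u p * (h p * (-(pd β h p ^ 2)⁻¹ * pd α (pd β h) p) +
          (pd β h p)⁻¹ * pd α h p)) := by
    show fderiv ℝ _ p (Pi.single α 1) = _
    rw [hfun, Hf.fderiv]
    simp [pd, smul_eq_mul]
    ring
  have hstep : pd α (fun x => u x - (h x / pd β h x) * pd β u x) p =
      (1 - a α β p * h p / pd β h p) *
        (pd α u p - (pd α h p / pd β h p) * pd β u p) := by
    rw [key, hheq α β hαβ p hp, hueq α β hαβ p hp]
    field_simp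
    ring
  rw [hstep, mul_div_mul_left _ _ hW]
  field_simp
  ring
end

section
/- Fix an index α. Let λ^1,…,λ^n and μ^1,…,μ^n be smooth on Ω with λ^i ≠ λ^j pointwise for i ≠ j, satisfying ∂_j μ^i/(μ^j − μ^i) = ∂_j λ^i/(λ^j − λ^i) for all i ≠ j; assume μ^α, ∂_α μ^α and μ^α − μ^i (for i ≠ α) are nonvanishing on Ω. Define Λ^α = (λ^α ∂_α μ^α − μ^α ∂_α λ^α)/∂_α μ^α and Λ^i = (λ^i μ^α − λ^α μ^i)/(μ^α − μ^i) for i ≠ α. Then for every triple of smooth functions u, f, q on Ω with ∂_i f = λ^i ∂_i u and ∂_i q = μ^i ∂_i u for all i, the adjoint Lévy transforms U = u − q/μ^α and F = f − λ^α q/μ^α satisfy ∂_i F = Λ^i ∂_i U for all i = 1,…,n. -/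
/-! Write `w = q/μ^α`. Since `∂_i q = μ^i ∂_i u`, the quotient rule gives
`μ^α ∂_i U = (μ^α - μ^i) ∂_i u + w ∂_i μ^α` and
`μ^α ∂_i F = (λ^i μ^α - λ^α μ^i) ∂_i u + w (λ^α ∂_i μ^α - μ^α ∂_i λ^α)`,
so it suffices that `Λ^i` maps each coefficient of `∂_i U` to the corresponding one of `∂_i F`.
For `i = α` the first coefficients vanish and the second relation is the definition of `Λ^α`;
for `i ≠ α` the first relation is the definition of `Λ^i` and the second is the commutativity
condition `∂_i λ^α / (λ^i - λ^α) = ∂_i μ^α / (μ^i - μ^α)`. -/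

section PartialDerivative

variable {n : ℕ} {i : Fin n} {v w : (Fin n → ℝ) → ℝ} {p : Fin n → ℝ}

theorem pd_fun_sub (hv : DifferentiableAt ℝ v p) (hw : DifferentiableAt ℝ w p) :
    pd i (fun x => v x - w x) p = pd i v p - pd i w p := by
  simp [pd, fderiv_fun_sub hv hw]

theorem pd_fun_mul (hv : DifferentiableAt ℝ v p) (hw : DifferentiableAt ℝ w p) :
    pd i (fun x => v x * w x) p = v p * pd i w p + w p * pd i v p := by
  simp [pd, fderiv_fun_mul hv hw]

theorem pd_fun_div (hv : DifferentiableAt ℝ v p) (hw : DifferentiableAt ℝ w p)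
    (hw₀ : w p ≠ 0) :
    pd i (fun x => v x / w x) p = (pd i v p * w p - v p * pd i w p) / w p ^ 2 := by
  have hinv : HasFDerivAt (fun x => (w x)⁻¹) ((-(w p ^ 2)⁻¹) • fderiv ℝ w p) p :=
    (hasDerivAt_inv hw₀).comp_hasFDerivAt p hw.hasFDerivAt
  simp only [pd, div_eq_mul_inv, fderiv_fun_mul hv hinv.differentiableAt, hinv.fderiv,
    add_apply, smul_apply, smul_eq_mul]
  field_simp
  ring

end PartialDerivative

section AdjointLevy

variable {n : ℕ} {i : Fin n} {u f q L M : (Fin n → ℝ) → ℝ} {p : Fin n → ℝ} {l m : ℝ}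

theorem pd_div_of_pd_eq_mul (hq : DifferentiableAt ℝ q p) (hM : DifferentiableAt ℝ M p)
    (hM₀ : M p ≠ 0) (hqu : pd i q p = m * pd i u p) :
    pd i (fun x => q x / M x) p = (m * pd i u p - q p / M p * pd i M p) / M p := by
  rw [pd_fun_div hq hM hM₀, hqu]
  field_simp

theorem pd_sub_div_of_pd_eq_mul (hu : DifferentiableAt ℝ u p) (hq : DifferentiableAt ℝ q p)
    (hM : DifferentiableAt ℝ M p) (hM₀ : M p ≠ 0) (hqu : pd i q p = m * pd i u p) :
    pd i (fun x => u x - q x / M x) p = ((M p - m) * pd i u p + q p / M p * pd i M p) / M p := by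
  have hqM : DifferentiableAt ℝ (fun x => q x / M x) p := by fun_prop (disch := exact hM₀)
  rw [pd_fun_sub hu hqM, pd_div_of_pd_eq_mul hq hM hM₀ hqu]
  field_simp
  ring

theorem pd_sub_mul_div_of_pd_eq_mul (hf : DifferentiableAt ℝ f p) (hL : DifferentiableAt ℝ L p)
    (hq : DifferentiableAt ℝ q p) (hM : DifferentiableAt ℝ M p) (hM₀ : M p ≠ 0)
    (hfu : pd i f p = l * pd i u p) (hqu : pd i q p = m * pd i u p) :
    pd i (fun x => f x - L x * q x / M x) p =
      ((l * M p - L p * m) * pd i u p + q p / M p * (L p * pd i M p - M p * pd i L p)) / M p := by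
  have hqM : DifferentiableAt ℝ (fun x => q x / M x) p := by fun_prop (disch := exact hM₀)
  have hLqM : DifferentiableAt ℝ (fun x => L x * (q x / M x)) p := by
    fun_prop (disch := exact hM₀)
  simp_rw [mul_div_assoc]
  rw [pd_fun_sub hf hLqM, pd_fun_mul hL hqM, pd_div_of_pd_eq_mul hq hM hM₀ hqu, hfu]
  field_simp
  ring

end AdjointLevy

theorem velocity_mul_eq_of_commuting {L l M m dL dM Λ : ℝ} (hM : M - m ≠ 0) (hl : l ≠ L)
    (hc : dM / (m - M) = dL / (l - L)) (hΛ : Λ * (M - m) = l * M - L * m) :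
    Λ * dM = L * dM - M * dL := by
  have hm : m - M ≠ 0 := by rw [← neg_sub]; exact neg_ne_zero.mpr hM
  rw [div_eq_div_iff hm (sub_ne_zero.mpr hl)] at hc
  apply mul_right_cancel₀ hM
  linear_combination dM * hΛ + M * hc

/-- the adjoint Lévy transforms `U = u − q/μ^α`, `F = f − λ^α q/μ^α`
of a conservation law `(u, f)` (with `q` the flux of `u` for the commuting flow `μ`)
satisfy `∂_i F = Λ^i ∂_i U`, where `Λ` are the adjoint-Lévy-transformed velocities (29). -/
theorem stmt14 {n : ℕ} (Ω : Set (Fin n → ℝ)) (hΩ : IsOpen Ω) (α : Fin n)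
    (lam mu : Fin n → (Fin n → ℝ) → ℝ)
    (hlam : ∀ i, ContDiffOn ℝ (⊤ : ℕ∞) (lam i) Ω)
    (hmu : ∀ i, ContDiffOn ℝ (⊤ : ℕ∞) (mu i) Ω)
    (hdist : ∀ i j, i ≠ j → ∀ p ∈ Ω, lam i p ≠ lam j p)
    (hcomm : ∀ i j, i ≠ j → ∀ p ∈ Ω,
      pd j (mu i) p / (mu j p - mu i p) = pd j (lam i) p / (lam j p - lam i p))
    (hmuα0 : ∀ p ∈ Ω, mu α p ≠ 0)
    (hdmuα0 : ∀ p ∈ Ω, pd α (mu α) p ≠ 0)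
    (hmudiff : ∀ i, i ≠ α → ∀ p ∈ Ω, mu α p - mu i p ≠ 0)
    (Lam : Fin n → (Fin n → ℝ) → ℝ)
    (hLamα : ∀ p, Lam α p =
      (lam α p * pd α (mu α) p - mu α p * pd α (lam α) p) / pd α (mu α) p)
    (hLami : ∀ i, i ≠ α → ∀ p, Lam i p =
      (lam i p * mu α p - lam α p * mu i p) / (mu α p - mu i p)) :
    ∀ u f q : (Fin n → ℝ) → ℝ,
      ContDiffOn ℝ (⊤ : ℕ∞) u Ω → ContDiffOn ℝ (⊤ : ℕ∞) f Ω →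
      ContDiffOn ℝ (⊤ : ℕ∞) q Ω →
      (∀ i, ∀ p ∈ Ω, pd i f p = lam i p * pd i u p) →
      (∀ i, ∀ p ∈ Ω, pd i q p = mu i p * pd i u p) →
      ∀ i, ∀ p ∈ Ω,
        pd i (fun x => f x - lam α x * q x / mu α x) p
          = Lam i p * pd i (fun x => u x - q x / mu α x) p := by
  intro u f q hu hf hq hfu hqu i p hp
  have diff (g : (Fin n → ℝ) → ℝ) (hg : ContDiffOn ℝ (⊤ : ℕ∞) g Ω) :
      DifferentiableAt ℝ g p :=
    (hg.contDiffAt (hΩ.mem_nhds hp)).differentiableAt (by simp)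
  have hΛ₁ : Lam i p * (mu α p - mu i p) = lam i p * mu α p - lam α p * mu i p := by
    rcases eq_or_ne i α with rfl | hiα
    · ring
    · rw [hLami i hiα, div_mul_cancel₀ _ (hmudiff i hiα p hp)]
  have hΛ₂ :
      Lam i p * pd i (mu α) p = lam α p * pd i (mu α) p - mu α p * pd i (lam α) p := by
    rcases eq_or_ne i α with rfl | hiα
    · rw [hLamα, div_mul_cancel₀ _ (hdmuα0 p hp)]
    · exact velocity_mul_eq_of_commuting (hmudiff i hiα p hp) (hdist i α hiα p hp)
        (hcomm α i hiα.symm p hp) hΛ₁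
  have hM := diff _ (hmu α)
  rw [pd_sub_mul_div_of_pd_eq_mul (diff f hf) (diff _ (hlam α)) (diff q hq) hM (hmuα0 p hp)
      (hfu i p hp) (hqu i p hp),
    pd_sub_div_of_pd_eq_mul (diff u hu) (diff q hq) hM (hmuα0 p hp) (hqu i p hp),
    ← hΛ₁, ← hΛ₂]
  ring
end
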